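/- arXiv:1801.10346 — 5 statements merged into one kernel-verified Lean document; each statement's English description precedes it below -/
import Mathlib

section
/- Let K > 0, h ∈ (0,1), v a unit vector in ℝ^d, and P a Borel probability measure on ℝ^d with support contained in B̄(0,K) such that P({y : ⟨y,v⟩ = c_{P,h}(v)}) = 0. Set x_n = n·v for n ∈ ℕ. Then for P-almost every y ∈ ℝ^d, the indicator 1_{B(x_n, δ_{P,h}(x_n))}(y) converges, as n → ∞, to 1_{H(v, c_{P,h}(v))}(y). -/
open MeasureTheory ENNReal Set Metric

noncomputable section

/-- `d`-dimensional Euclidean space. -/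
abbrev Ed (d : ℕ) : Type := EuclideanSpace ℝ (Fin d)

variable {d : ℕ}

/-- A Borel probability measure is sub-Gaussian with variance `V²` if
`Q {‖x‖ > t} ≤ exp (−t²/(2V²))` for all `t > V`. -/
def IsSubG (Q : Measure (Ed d)) (V : ℝ) : Prop :=
  ∀ t : ℝ, V < t → Q {x : Ed d | t < ‖x‖} ≤ ENNReal.ofReal (Real.exp (-(t ^ 2) / (2 * V ^ 2)))

/-- `δ_{P,l}(x) = inf {r > 0 | P (B̄(x,r)) > l}`. -/
def dtmRadius (P : Measure (Ed d)) (l : ℝ) (x : Ed d) : ℝ :=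
  sInf {r : ℝ | 0 < r ∧ ENNReal.ofReal l < P (closedBall x r)}

/-- The distance to the measure `P` with mass parameter `h`. -/
def dtm (P : Measure (Ed d)) (h : ℝ) (x : Ed d) : ℝ :=
  Real.sqrt ((1 / h) * ∫ l in (0:ℝ)..h, (dtmRadius P l x) ^ 2)

/-- `c_{P,h}(v) = sup {c | P {y | ⟨y,v⟩ > c} > h}`. -/
def cInf (P : Measure (Ed d)) (h : ℝ) (v : Ed d) : ℝ :=
  sSup {c : ℝ | ENNReal.ofReal h < P {y : Ed d | c < (inner ℝ y v : ℝ)}}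

/-- `𝒫_{x,h}(P)`: probability measures `(1/h)·Q` with `Q` a sub-measure of `P` of total mass `h`,
coinciding with `P` on the open ball `B(x, δ_{P,h}(x))` and supported on the closed ball. -/
def PlocPt (P : Measure (Ed d)) (h : ℝ) (x : Ed d) : Set (Measure (Ed d)) :=
  {μ | ∃ Q : Measure (Ed d),
    μ = (ENNReal.ofReal h)⁻¹ • Q ∧ Q ≤ P ∧ Q Set.univ = ENNReal.ofReal h ∧
    (∀ A : Set (Ed d), A ⊆ ball x (dtmRadius P h x) → Q A = P A) ∧
    Q ((closedBall x (dtmRadius P h x))ᶜ) = 0}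

/-- `𝒫_{v∞,h}(P)`: probability measures `(1/h)·Q` with `Q` a sub-measure of `P` of total mass `h`,
coinciding with `P` on the open half-space `H(v, c_{P,h}(v))` and giving no mass to
`{y | ⟨y,v⟩ < c_{P,h}(v)}`. -/
def PlocInf (P : Measure (Ed d)) (h : ℝ) (v : Ed d) : Set (Measure (Ed d)) :=
  {μ | ∃ Q : Measure (Ed d),
    μ = (ENNReal.ofReal h)⁻¹ • Q ∧ Q ≤ P ∧ Q Set.univ = ENNReal.ofReal h ∧
    (∀ A : Set (Ed d), A ⊆ {y : Ed d | cInf P h v < (inner ℝ y v : ℝ)} → Q A = P A) ∧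
    Q {y : Ed d | (inner ℝ y v : ℝ) < cInf P h v} = 0}

/-- Mean of a measure. -/
def mMean (μ : Measure (Ed d)) : Ed d := ∫ u, u ∂μ

/-- Variance of a measure. -/
def mVar (μ : Measure (Ed d)) : ℝ := ∫ u, ‖u - mMean μ‖ ^ 2 ∂μ

/-- The set `M_h(P)` of all means of localized sub-measures of `P`. -/
def Mset (P : Measure (Ed d)) (h : ℝ) : Set (Ed d) :=
  {m | (∃ x : Ed d, ∃ μ ∈ PlocPt P h x, m = mMean μ) ∨
       (∃ v : Ed d, ‖v‖ = 1 ∧ ∃ μ ∈ PlocInf P h v, m = mMean μ)}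

/-- A center is either a point of `ℝ^d` or a point at infinity `v∞` for a unit vector `v`. -/
def ExtPt (d : ℕ) : Type := Ed d ⊕ {v : Ed d // ‖v‖ = 1}

/-- Localized measures at an extended point. -/
def PlocExt (P : Measure (Ed d)) (h : ℝ) : ExtPt d → Set (Measure (Ed d))
  | Sum.inl x => PlocPt P h x
  | Sum.inr v => PlocInf P h v.1

/-- A `k`-center for `P`: centers `t i` with localized measures `μ i ∈ 𝒫_{t i,h}(P)`. -/
def IsKCenter (P : Measure (Ed d)) (h : ℝ) (k : ℕ)
    (t : Fin k → ExtPt d) (μ : Fin k → Measure (Ed d)) : Prop :=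
  ∀ i, μ i ∈ PlocExt P h (t i)

/-- The risk of a `k`-center. -/
def risk (P : Measure (Ed d)) (k : ℕ) (μ : Fin k → Measure (Ed d)) : ℝ :=
  ∫ u, (⨅ i : Fin k, (‖u - mMean (μ i)‖ ^ 2 + mVar (μ i))) ∂P

/-- `f` is a `k`-PDTM of `P`: the square root of the power function of a risk-minimizing
`k`-center. -/
def IsKPDTM (P : Measure (Ed d)) (h : ℝ) (k : ℕ) (f : Ed d → ℝ) : Prop :=
  ∃ (t : Fin k → ExtPt d) (μ : Fin k → Measure (Ed d)),
    IsKCenter P h k t μ ∧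
    (∀ (t' : Fin k → ExtPt d) (μ' : Fin k → Measure (Ed d)),
      IsKCenter P h k t' μ' → risk P k μ ≤ risk P k μ') ∧
    ∀ x, f x = Real.sqrt (⨅ i : Fin k, (‖x - mMean (μ i)‖ ^ 2 + mVar (μ i)))

/-- `f` is an `ε`-approximate `k`-PDTM of `P`. -/
def IsEpsKPDTM (P : Measure (Ed d)) (h : ℝ) (k : ℕ) (ε : ℝ) (f : Ed d → ℝ) : Prop :=
  ∃ (t : Fin k → ExtPt d) (μ : Fin k → Measure (Ed d)),
    IsKCenter P h k t μ ∧
    (∀ (t' : Fin k → ExtPt d) (μ' : Fin k → Measure (Ed d)),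
      IsKCenter P h k t' μ' → risk P k μ ≤ risk P k μ' + ε) ∧
    ∀ x, f x = Real.sqrt (⨅ i : Fin k, (‖x - mMean (μ i)‖ ^ 2 + mVar (μ i)))

/-- `ω²_{P,h}(θ) = sup_x (d_{P,h}²(x) − ‖x−θ‖²)`, as an extended nonnegative real. -/
def omega2 (P : Measure (Ed d)) (h : ℝ) (θ : Ed d) : ℝ≥0∞ :=
  ⨆ x : Ed d, ENNReal.ofReal ((dtm P h x) ^ 2 - ‖x - θ‖ ^ 2)

/-- When `P` puts no mass on spheres, the unique element of `𝒫_{x,h}(P)`. -/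
def locMeasure (P : Measure (Ed d)) (h : ℝ) (x : Ed d) : Measure (Ed d) :=
  (ENNReal.ofReal h)⁻¹ • P.restrict (ball x (dtmRadius P h x))

/-- The `Lᵖ`-Wasserstein distance. -/
def Wdist (p : ℝ) (P Q : Measure (Ed d)) : ℝ :=
  sInf {w | ∃ π : Measure (Ed d × Ed d),
    π.map Prod.fst = P ∧ π.map Prod.snd = Q ∧
    w = (∫ y, ‖y.1 - y.2‖ ^ p ∂π) ^ (1 / p)}

/-- The support of a measure. -/
def msupport (P : Measure (Ed d)) : Set (Ed d) :=
  {x : Ed d | ∀ r : ℝ, 0 < r → 0 < P (ball x r)}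

end

/-! Write `x_t = t • v` and `c = c_{P,h}(v)`. If `⟨y,v⟩ > s > c`, every closed ball around `x_t`
of radius `< t - s` lies in `H(v,s)`, which has mass `≤ h`, so `δ_{P,h}(x_t) ≥ t - s`, and this
exceeds `‖y - x_t‖` for large `t`. If `⟨y,v⟩ < s < c`, then once `K² ≤ 2t(s - ⟨y,v⟩)` the ball
`B̄(x_t, ‖y - x_t‖)` contains `H(v,s) ∩ B̄(0,K)`, of mass `> h`, so `δ_{P,h}(x_t) ≤ ‖y - x_t‖`.
Only the `P`-null hyperplane `⟨y,v⟩ = c` escapes both cases. -/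

open Filter

section

variable {E : Type*} [NormedAddCommGroup E] [InnerProductSpace ℝ E]

def halfSpace (v : E) (c : ℝ) : Set E := {y | c < (inner ℝ y v : ℝ)}

lemma measurableSet_halfSpace [MeasurableSpace E] [OpensMeasurableSpace E] (v : E) (c : ℝ) :
    MeasurableSet (halfSpace v c) :=
  (isOpen_lt continuous_const (continuous_id.inner continuous_const)).measurableSet

lemma halfSpace_antitone (v : E) : Antitone (halfSpace v) :=
  fun _ _ hst _ hy => lt_of_le_of_lt hst hy

lemma norm_sub_smul_sq {v : E} (hv : ‖v‖ = 1) (y : E) (t : ℝ) :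
    ‖y - t • v‖ ^ 2 = ‖y‖ ^ 2 - 2 * t * (inner ℝ y v : ℝ) + t ^ 2 := by
  rw [norm_sub_sq_real, real_inner_smul_right, norm_smul, hv, mul_one, Real.norm_eq_abs, sq_abs]
  ring

lemma closedBall_smul_subset_halfSpace {v : E} (hv : ‖v‖ = 1) {t s ρ : ℝ}
    (hρ : ρ < t - s) : closedBall (t • v) ρ ⊆ halfSpace v s := by
  intro z hz
  have hdist : ‖z - t • v‖ ≤ ρ := by rwa [mem_closedBall, dist_eq_norm] at hz
  have hinner : (inner ℝ z v : ℝ) = inner ℝ (z - t • v) v + t := by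
    rw [inner_sub_left, real_inner_smul_left, real_inner_self_eq_norm_sq, hv]
    ring
  have hlow : -‖z - t • v‖ ≤ inner ℝ (z - t • v) v := by
    simpa [hv] using neg_le_of_abs_le (abs_real_inner_le_norm (z - t • v) v)
  show s < (inner ℝ z v : ℝ)
  linarith

lemma norm_sub_smul_le_norm_sub_smul {v : E} (hv : ‖v‖ = 1) {y z : E} {t : ℝ}
    (h : ‖z‖ ^ 2 - ‖y‖ ^ 2 ≤ 2 * t * ((inner ℝ z v : ℝ) - inner ℝ y v)) :
    ‖z - t • v‖ ≤ ‖y - t • v‖ := by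
  refine (pow_le_pow_iff_left₀ (norm_nonneg _) (norm_nonneg _) two_ne_zero).1 ?_
  rw [norm_sub_smul_sq hv, norm_sub_smul_sq hv]
  linarith

end

lemma exists_lt_measure_of_monotone {α : Type*} [MeasurableSpace α] {μ : Measure α}
    [IsProbabilityMeasure μ] {s : ℕ → Set α} (hs : Monotone s) (hU : ⋃ n, s n = univ)
    {l : ℝ} (hl : l < 1) : ∃ n, ENNReal.ofReal l < μ (s n) := by
  have hlim := tendsto_measure_iUnion_atTop (μ := μ) hs
  rw [hU, measure_univ] at hlim
  exact (hlim.eventually (lt_mem_nhds (ofReal_lt_one.2 hl))).exists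

section

variable {d : ℕ} {P : Measure (Ed d)} {h : ℝ} {v : Ed d}

lemma nonempty_cInf_set [IsProbabilityMeasure P] (hh : h < 1) :
    {c | ENNReal.ofReal h < P (halfSpace v c)}.Nonempty := by
  have hU : ⋃ n : ℕ, halfSpace v (-n) = univ :=
    iUnion_eq_univ_iff.2 fun y => (exists_nat_gt (-inner ℝ y v)).imp fun n hn => by
      show -(n : ℝ) < inner ℝ y v
      linarith
  obtain ⟨n, hn⟩ := exists_lt_measure_of_monotone (μ := P)
    (fun _ _ hmn => halfSpace_antitone v (neg_le_neg (Nat.cast_le.2 hmn))) hU hh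
  exact ⟨_, hn⟩

lemma bddAbove_cInf_set [IsFiniteMeasure P] (hh : 0 < h) :
    BddAbove {c | ENNReal.ofReal h < P (halfSpace v c)} := by
  have hlim := tendsto_measure_iInter_atTop (μ := P) (s := fun n : ℕ => halfSpace v n)
    (fun n => (measurableSet_halfSpace v n).nullMeasurableSet)
    (fun _ _ hmn => halfSpace_antitone v (Nat.cast_le.2 hmn)) ⟨0, measure_ne_top _ _⟩
  have hempty : ⋂ n : ℕ, halfSpace v n = ∅ :=
    iInter_eq_empty_iff.2 fun y => (exists_nat_ge (inner ℝ y v)).imp fun _ hn => not_lt.2 hn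
  rw [hempty, measure_empty] at hlim
  obtain ⟨n, hn⟩ := (hlim.eventually (gt_mem_nhds (ofReal_pos.2 hh))).exists
  exact ⟨n, fun c hc => le_of_not_gt fun hnc =>
    lt_asymm (hc.trans_le (measure_mono (halfSpace_antitone v hnc.le))) hn⟩

lemma lt_measure_halfSpace_of_lt_cInf [IsProbabilityMeasure P] (hh : h < 1) {s : ℝ}
    (hs : s < cInf P h v) : ENNReal.ofReal h < P (halfSpace v s) := by
  obtain ⟨c, hc, hsc⟩ := exists_lt_of_lt_csSup (nonempty_cInf_set hh) hs
  exact hc.trans_le (measure_mono (halfSpace_antitone v hsc.le))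

lemma measure_halfSpace_le_of_cInf_lt [IsFiniteMeasure P] (hh : 0 < h) {s : ℝ}
    (hs : cInf P h v < s) : P (halfSpace v s) ≤ ENNReal.ofReal h :=
  le_of_not_gt fun hlt => (le_csSup (bddAbove_cInf_set hh) hlt).not_gt hs

lemma dtmRadius_le {l r : ℝ} {x : Ed d} (hr : 0 < r)
    (hlr : ENNReal.ofReal l < P (closedBall x r)) : dtmRadius P l x ≤ r :=
  csInf_le ⟨0, fun _ hr' => hr'.1.le⟩ ⟨hr, hlr⟩

lemma le_dtmRadius [IsProbabilityMeasure P] {l ρ : ℝ} {x : Ed d} (hl : l < 1)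
    (hρ : P (closedBall x ρ) ≤ ENNReal.ofReal l) : ρ ≤ dtmRadius P l x := by
  obtain ⟨n, hn⟩ := exists_lt_measure_of_monotone (μ := P)
    (fun _ _ hmn => closedBall_subset_closedBall (Nat.cast_le.2 hmn)) (iUnion_closedBall_nat x) hl
  refine le_csInf ⟨n + 1, by positivity,
    hn.trans_le (measure_mono (closedBall_subset_closedBall (by linarith)))⟩ fun r hr => ?_
  exact le_of_not_gt fun hrρ =>
    (hr.2.trans_le (measure_mono (closedBall_subset_closedBall hrρ.le))).not_ge hρ

lemma sub_le_dtmRadius_smul [IsProbabilityMeasure P] (hh : h ∈ Ioo 0 1) (hv : ‖v‖ = 1)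
    {s : ℝ} (hs : cInf P h v < s) (t : ℝ) : t - s ≤ dtmRadius P h (t • v) :=
  le_of_forall_lt_imp_le_of_dense fun _ hρ => le_dtmRadius hh.2
    ((measure_mono (closedBall_smul_subset_halfSpace hv hρ)).trans
      (measure_halfSpace_le_of_cInf_lt hh.1 hs))

lemma dtmRadius_smul_le_norm_sub [IsProbabilityMeasure P] (hh : h < 1) (hv : ‖v‖ = 1) {K : ℝ}
    (hsupp : P (closedBall (0 : Ed d) K)ᶜ = 0) {s t : ℝ} {y : Ed d} (hs : s < cInf P h v)
    (hys : inner ℝ y v < s) (ht : K ^ 2 ≤ 2 * t * (s - inner ℝ y v)) (hyt : y ≠ t • v) :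
    dtmRadius P h (t • v) ≤ ‖y - t • v‖ := by
  refine dtmRadius_le (norm_pos_iff.2 (sub_ne_zero.2 hyt))
    ((lt_measure_halfSpace_of_lt_cInf hh hs).trans_le (measure_mono_ae ?_))
  filter_upwards [mem_ae_iff.2 hsupp] with z hzK hzs
  have hzK' : ‖z‖ ≤ K := by simpa using hzK
  have hzs' : s < inner ℝ z v := hzs
  have ht0 : 0 ≤ t := by nlinarith [sq_nonneg K]
  show dist z (t • v) ≤ _
  rw [dist_eq_norm]
  apply norm_sub_smul_le_norm_sub_smul hv
  calc ‖z‖ ^ 2 - ‖y‖ ^ 2 ≤ K ^ 2 := by nlinarith [norm_nonneg z, sq_nonneg ‖y‖]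
    _ ≤ 2 * t * (s - inner ℝ y v) := ht
    _ ≤ 2 * t * (inner ℝ z v - inner ℝ y v) := by gcongr

lemma eventually_mem_ball_dtmRadius [IsProbabilityMeasure P] (hh : h ∈ Ioo 0 1) (hv : ‖v‖ = 1)
    {y : Ed d} (hy : cInf P h v < inner ℝ y v) :
    ∀ᶠ t : ℝ in atTop, y ∈ ball (t • v) (dtmRadius P h (t • v)) := by
  obtain ⟨s, hcs, hsy⟩ := exists_between hy
  filter_upwards [eventually_gt_atTop s,
    eventually_gt_atTop ((‖y‖ ^ 2 - s ^ 2) / (2 * (inner ℝ y v - s)))] with t hts ht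
  rw [mem_ball, dist_eq_norm]
  refine lt_of_lt_of_le ?_ (sub_le_dtmRadius_smul hh hv hcs t)
  refine (pow_lt_pow_iff_left₀ (norm_nonneg _) (by linarith) two_ne_zero).1 ?_
  rw [div_lt_iff₀ (by linarith)] at ht
  rw [norm_sub_smul_sq hv]
  linarith

lemma eventually_notMem_ball_dtmRadius [IsProbabilityMeasure P] (hh : h < 1) (hv : ‖v‖ = 1)
    {K : ℝ} (hsupp : P (closedBall (0 : Ed d) K)ᶜ = 0) {y : Ed d} (hy : inner ℝ y v < cInf P h v) :
    ∀ᶠ t : ℝ in atTop, y ∉ ball (t • v) (dtmRadius P h (t • v)) := by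
  obtain ⟨s, hys, hsc⟩ := exists_between hy
  filter_upwards [eventually_gt_atTop (inner ℝ y v),
    eventually_ge_atTop (K ^ 2 / (2 * (s - inner ℝ y v)))] with t hyt ht
  rw [mem_ball, dist_eq_norm, not_lt]
  refine dtmRadius_smul_le_norm_sub hh hv hsupp hsc hys ?_ ?_
  · rw [div_le_iff₀ (by linarith)] at ht
    linarith
  · rintro rfl
    simp [real_inner_smul_left, hv] at hyt

end

theorem stmt_1_general {d : ℕ} (K : ℝ) (h : ℝ) (hh : h ∈ Set.Ioo (0:ℝ) 1)
    (v : Ed d) (hv : ‖v‖ = 1)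
    (P : Measure (Ed d)) [IsProbabilityMeasure P]
    (hsupp : P ((closedBall (0 : Ed d) K)ᶜ) = 0)
    (hbd : P {y : Ed d | (inner ℝ y v : ℝ) = cInf P h v} = 0) :
    ∀ᵐ y ∂P, Filter.Tendsto
      (fun n : ℕ =>
        Set.indicator (ball ((n : ℝ) • v) (dtmRadius P h ((n : ℝ) • v))) (fun _ => (1:ℝ)) y)
      Filter.atTop
      (nhds (Set.indicator {z : Ed d | cInf P h v < (inner ℝ z v : ℝ)} (fun _ => (1:ℝ)) y)) := by
  filter_upwards [measure_eq_zero_iff_ae_notMem.1 hbd] with y hy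
  rcases lt_or_gt_of_ne hy with hlt | hgt
  · have hy' : y ∉ {z : Ed d | cInf P h v < inner ℝ z v} := not_lt.2 hlt.le
    rw [indicator_of_notMem hy']
    refine tendsto_const_nhds.congr' ?_
    filter_upwards [tendsto_natCast_atTop_atTop.eventually
      (eventually_notMem_ball_dtmRadius hh.2 hv hsupp hlt)] with n hn
    exact (indicator_of_notMem hn _).symm
  · have hy' : y ∈ {z : Ed d | cInf P h v < inner ℝ z v} := hgt
    rw [indicator_of_mem hy']
    refine tendsto_const_nhds.congr' ?_
    filter_upwards [tendsto_natCast_atTop_atTop.eventually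
      (eventually_mem_ball_dtmRadius hh hv hgt)] with n hn
    exact (indicator_of_mem hn fun _ => (1 : ℝ)).symm

/-- convergence of the indicators of the DTM balls along `x_n = n·v` to the
indicator of the half-space `H(v, c_{P,h}(v))`, `P`-almost surely. -/
theorem stmt_1 {d : ℕ} (K : ℝ) (hK : 0 < K) (h : ℝ) (hh : h ∈ Set.Ioo (0:ℝ) 1)
    (v : Ed d) (hv : ‖v‖ = 1)
    (P : Measure (Ed d)) [IsProbabilityMeasure P]
    (hsupp : P ((closedBall (0 : Ed d) K)ᶜ) = 0)
    (hbd : P {y : Ed d | (inner ℝ y v : ℝ) = cInf P h v} = 0) :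
    ∀ᵐ y ∂P, Filter.Tendsto
      (fun n : ℕ =>
        Set.indicator (ball ((n : ℝ) • v) (dtmRadius P h ((n : ℝ) • v))) (fun _ => (1:ℝ)) y)
      Filter.atTop
      (nhds (Set.indicator {z : Ed d | cInf P h v < (inner ℝ z v : ℝ)} (fun _ => (1:ℝ)) y)) :=
  stmt_1_general K h hh v hv P hsupp hbd
end

section
/- Let P be a Borel probability measure on ℝ^d with finite second moment. For all 0 < h < h' ≤ 1, the convex hull Conv(M_{h'}(P)) is contained in the convex hull Conv(M_h(P)). -/
open MeasureTheory ENNReal Set Metric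

/-!
Rescaling by `h / h'` turns a sub-measure of `P` of mass `h'` into one of mass `h` with the same
normalisation, so it suffices to show that the mean of every normalised sub-measure `Q` of `P` of
mass `h` lies in `Conv(M_h(P))`. If it did not, a unit vector `v` would separate it from that
convex hull. By the bathtub principle, among sub-measures of mass `h` the integral of `⟪·, v⟫` is
maximised exactly by those that keep all of `P` beyond the quantile `c_{P,h}(v)` and nothing
below it, i.e. by the elements of `𝒫_{v∞,h}(P)`, whose means lie in `M_h(P)`. The separation
forces `Q` to attain this maximum, so its own mean lies in `M_h(P)`: a contradiction.
-/

open Filter Topology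
open scoped RealInnerProductSpace

section Separation

variable {E : Type*} [NormedAddCommGroup E] [InnerProductSpace ℝ E] [FiniteDimensional ℝ E]

theorem exists_norm_eq_one_forall_inner_le_of_notMem_interior [Nontrivial E] {C : Set E}
    (hC : Convex ℝ C) {x : E} (hx : x ∉ interior C) :
    ∃ v : E, ‖v‖ = 1 ∧ ∀ y ∈ C, ⟪y, v⟫ ≤ ⟪x, v⟫ := by
  suffices ∃ v : E, v ≠ 0 ∧ ∀ y ∈ C, ⟪y, v⟫ ≤ ⟪x, v⟫ by
    obtain ⟨v, hv, hle⟩ := this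
    refine ⟨‖v‖⁻¹ • v, norm_smul_inv_norm hv, fun y hy => ?_⟩
    simp only [real_inner_smul_right]
    exact mul_le_mul_of_nonneg_left (hle y hy) (by positivity)
  rcases C.eq_empty_or_nonempty with rfl | hne
  · obtain ⟨v, hv⟩ := exists_ne (0 : E)
    exact ⟨v, hv, by simp⟩
  by_cases hint : (interior C).Nonempty
  · obtain ⟨f, hf, hle⟩ := geometric_hahn_banach_of_nonempty_interior_point hC hx hint
    refine ⟨(InnerProductSpace.toDual ℝ E).symm f, by simpa using hf, fun y hy => ?_⟩
    simpa [real_inner_comm _ y, real_inner_comm _ x] using hle y hy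
  -- `C` lies in a proper affine subspace, on which a normal vector is constant.
  have hspan : vectorSpan ℝ C ≠ ⊤ := by
    rwa [Ne, ← AffineSubspace.affineSpan_eq_top_iff_vectorSpan_eq_top_of_nonempty ℝ E E hne,
      ← hC.interior_nonempty_iff_affineSpan_eq_top]
  obtain ⟨v, hv, hv0⟩ := Submodule.exists_mem_ne_zero_of_ne_bot
    (by rwa [Ne, Submodule.orthogonal_eq_bot_iff] : (vectorSpan ℝ C)ᗮ ≠ ⊥)
  obtain ⟨a, ha⟩ := hne
  have hconst : ∀ y ∈ C, ⟪y, v⟫ = ⟪a, v⟫ := fun y hy => by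
    have := (Submodule.mem_orthogonal' _ v).mp hv _ (vsub_mem_vectorSpan ℝ hy ha)
    rw [vsub_eq_sub, inner_sub_right] at this
    rw [real_inner_comm v y, real_inner_comm v a]
    linarith
  rcases le_total ⟪a, v⟫ ⟪x, v⟫ with hax | hxa
  · exact ⟨v, hv0, fun y hy => (hconst y hy).trans_le hax⟩
  · refine ⟨-v, neg_ne_zero.mpr hv0, fun y hy => ?_⟩
    simp only [inner_neg_right, hconst y hy]
    linarith

end Separation

section Quantile

variable {ν : Measure ℝ} {m : ℝ≥0∞}

theorem nonempty_setOf_lt_measure_Ioi (hm : m < ν univ) : {c : ℝ | m < ν (Ioi c)}.Nonempty := by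
  have : Tendsto (fun c => ν (Ioi c)) atBot (𝓝 (ν univ)) := by
    simpa [Function.comp_def] using tendsto_measure_iUnion_atBot (μ := ν) antitone_Ioi
  exact (this.eventually (lt_mem_nhds hm)).exists

variable [IsFiniteMeasure ν]

theorem bddAbove_setOf_lt_measure_Ioi (hm : 0 < m) : BddAbove {c : ℝ | m < ν (Ioi c)} := by
  have hempty : ⋂ c : ℝ, Ioi c = ∅ :=
    eq_empty_of_forall_notMem fun y hy => lt_irrefl y (mem_iInter.1 hy y)
  have : Tendsto (fun c => ν (Ioi c)) atTop (𝓝 0) := by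
    simpa [Function.comp_def, hempty] using tendsto_measure_iInter_atTop (μ := ν)
      (fun _ => measurableSet_Ioi.nullMeasurableSet) antitone_Ioi ⟨0, measure_ne_top _ _⟩
  obtain ⟨b, hb⟩ := (this.eventually (gt_mem_nhds hm)).exists_forall_of_atTop
  exact ⟨b, fun c hc => le_of_not_ge fun hbc => (hb c hbc).not_gt hc⟩

theorem measure_Ioi_sSup_le (hm : 0 < m) : ν (Ioi (sSup {c : ℝ | m < ν (Ioi c)})) ≤ m := by
  set c₀ := sSup {c : ℝ | m < ν (Ioi c)}
  obtain ⟨u, hu_anti, hu_gt, hu_lim⟩ := exists_seq_strictAnti_tendsto c₀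
  have hunion : ⋃ n, Ioi (u n) = Ioi c₀ :=
    (isGLB_of_tendsto_atTop hu_anti.antitone hu_lim).iUnion_Ioi_eq
  have hmono : Monotone fun n => Ioi (u n) := fun i j hij => Ioi_subset_Ioi (hu_anti.antitone hij)
  rw [← hunion, hmono.measure_iUnion]
  exact iSup_le fun n => not_lt.mp fun hlt =>
    (hu_gt n).not_ge (le_csSup (bddAbove_setOf_lt_measure_Ioi hm) hlt)

theorem le_measure_Ici_sSup (hm : m < ν univ) : m ≤ ν (Ici (sSup {c : ℝ | m < ν (Ioi c)})) := by
  set c₀ := sSup {c : ℝ | m < ν (Ioi c)}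
  obtain ⟨u, hu_mono, hu_lt, hu_lim⟩ := exists_seq_strictMono_tendsto c₀
  have hinter : ⋂ n, Ioi (u n) = Ici c₀ := by
    ext y
    simp only [mem_iInter, mem_Ioi, mem_Ici]
    exact ⟨fun hy => le_of_tendsto' hu_lim fun n => (hy n).le, fun hy n => (hu_lt n).trans_le hy⟩
  have hanti : Antitone fun n => Ioi (u n) := fun i j hij => Ioi_subset_Ioi (hu_mono.monotone hij)
  rw [← hinter, hanti.measure_iInter
    (fun _ => measurableSet_Ioi.nullMeasurableSet) ⟨0, measure_ne_top _ _⟩]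
  refine le_iInf fun n => ?_
  obtain ⟨c, hcS, hc⟩ := exists_lt_of_lt_csSup (nonempty_setOf_lt_measure_Ioi hm) (hu_lt n)
  exact hcS.le.trans (measure_mono (Ioi_subset_Ioi hc.le))

end Quantile

section SuperlevelTrim

variable {α : Type*} [MeasurableSpace α] {P Q S : Measure α}

theorem exists_le_restrict_eq_measure_univ_eq [IsFiniteMeasure P] {A B : Set α}
    (hA : MeasurableSet A) (hB : MeasurableSet B) (hAB : Disjoint A B) {m : ℝ≥0∞}
    (hAm : P A ≤ m) (hmAB : m ≤ P A + P B) :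
    ∃ S ≤ P, S.restrict A = P.restrict A ∧ S (A ∪ B)ᶜ = 0 ∧ S univ = m := by
  -- keep all of `A` and the fraction `t` of `B`
  set t := (m - P A) / P B
  have ht : t ≤ 1 := ENNReal.div_le_of_le_mul (by rwa [one_mul, tsub_le_iff_left])
  have htB : t * P B = m - P A := by
    rcases eq_or_ne (P B) 0 with h0 | h0
    · rw [h0, mul_zero, eq_comm, tsub_eq_zero_iff_le]
      simpa [h0] using hmAB
    · exact ENNReal.div_mul_cancel h0 (measure_ne_top P B)
  refine ⟨P.restrict A + t • P.restrict B, ?_, ?_, ?_, ?_⟩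
  · calc P.restrict A + t • P.restrict B ≤ P.restrict A + P.restrict B := by
          gcongr
          exact Measure.le_iff'.2 fun s => mul_le_of_le_one_left' ht
      _ = P.restrict (A ∪ B) := (Measure.restrict_union hAB hB).symm
      _ ≤ P := Measure.restrict_le_self
  · simp [Measure.restrict_restrict hA, hAB.inter_eq]
  · simp [Measure.restrict_apply' hA, Measure.restrict_apply' hB, inter_assoc,
      inter_right_comm _ _ A]
  · simp [htB, add_tsub_cancel_of_le hAm]

/-- Up to normalisation, `𝒫_{v∞,h}(P)` consists of the measures `S` of mass `h` with
`IsSuperlevelTrim P S ⟪·, v⟫ (c_{P,h}(v))`. -/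
structure IsSuperlevelTrim (P S : Measure α) (f : α → ℝ) (c : ℝ) : Prop where
  le : S ≤ P
  restrict_eq : S.restrict {x | c < f x} = P.restrict {x | c < f x}
  measure_lt_eq_zero : S {x | f x < c} = 0

variable {f : α → ℝ} {c : ℝ}

theorem exists_isSuperlevelTrim [IsFiniteMeasure P] (hf : Measurable f) {m : ℝ≥0∞}
    (hlt : P {x | c < f x} ≤ m) (hle : m ≤ P {x | c ≤ f x}) :
    ∃ S, IsSuperlevelTrim P S f c ∧ S univ = m := by
  have hAB : Disjoint {x | c < f x} {x | f x = c} := disjoint_left.2 fun x hlt heq => hlt.ne' heq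
  have hB : MeasurableSet {x | f x = c} := measurableSet_eq_fun hf measurable_const
  have hle_union : {x | c ≤ f x} = {x | c < f x} ∪ {x | f x = c} := by
    ext x; simp [le_iff_lt_or_eq, eq_comm]
  rw [hle_union, measure_union hAB hB] at hle
  obtain ⟨S, hSP, hSA, hSAB, hS⟩ :=
    exists_le_restrict_eq_measure_univ_eq (measurableSet_lt measurable_const hf) hB hAB hlt hle
  refine ⟨S, ⟨hSP, hSA, measure_mono_null (fun x (hx : f x < c) => ?_) hSAB⟩, hS⟩
  simp only [mem_compl_iff, mem_union, not_or]
  exact ⟨hx.not_gt, hx.ne⟩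

theorem exists_isSuperlevelTrim_sSup [IsFiniteMeasure P] (hf : Measurable f) {m : ℝ≥0∞}
    (hm0 : 0 < m) (hm : m < P univ) :
    ∃ S, IsSuperlevelTrim P S f (sSup {c | m < P {x | c < f x}}) ∧ S univ = m := by
  have hIoi : ∀ c, P {x | c < f x} = P.map f (Ioi c) := fun c => by
    rw [Measure.map_apply hf measurableSet_Ioi]; rfl
  have hIci : ∀ c, P {x | c ≤ f x} = P.map f (Ici c) := fun c => by
    rw [Measure.map_apply hf measurableSet_Ici]; rfl
  have hset : {c | m < P {x | c < f x}} = {c | m < P.map f (Ioi c)} := by simp_rw [hIoi]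
  refine exists_isSuperlevelTrim hf ?_ ?_
  · rw [hIoi, hset]
    exact measure_Ioi_sSup_le hm0
  · rw [hIci, hset]
    exact le_measure_Ici_sSup (by rwa [Measure.map_apply hf MeasurableSet.univ, preimage_univ])

theorem IsSuperlevelTrim.integral_eq [IsFiniteMeasure P] (hS : IsSuperlevelTrim P S f c)
    (hf : Integrable f P) (hQP : Q ≤ P) (hQS : Q univ = S univ) :
    ∫ x, f x ∂S = ∫ x, f x ∂Q + ∫ x, (f x - c)⁺ ∂(P - Q) + ∫ x, (f x - c)⁻ ∂Q := by
  have : IsFiniteMeasure Q := isFiniteMeasure_of_le P hQP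
  have hg : ∀ {μ}, μ ≤ P → Integrable (fun x => f x - c) μ := fun hμ =>
    (hf.sub (integrable_const c)).mono_measure hμ
  have hsub : ∀ μ : Measure α, μ ≤ P → ∫ x, f x - c ∂μ = ∫ x, f x ∂μ - μ.real univ * c :=
    fun μ hμ => by
      have := isFiniteMeasure_of_le P hμ
      rw [integral_sub (hf.mono_measure hμ) (integrable_const c), integral_const, smul_eq_mul]
  have hS_ge : ∀ᵐ x ∂S, c ≤ f x := by
    rw [ae_iff]; simpa only [not_le] using hS.measure_lt_eq_zero
  have hvanish : ∀ x, x ∉ {x | c < f x} → (f x - c)⁺ = 0 := fun x hx =>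
    posPart_of_nonpos (sub_nonpos.2 (not_lt.1 hx))
  have hSpos : ∫ x, f x - c ∂S = ∫ x, (f x - c)⁺ ∂P := calc
    ∫ x, f x - c ∂S = ∫ x, (f x - c)⁺ ∂S :=
      integral_congr_ae (hS_ge.mono fun x hx => (posPart_of_nonneg (sub_nonneg.2 hx)).symm)
    _ = ∫ x in {x | c < f x}, (f x - c)⁺ ∂S :=
      (setIntegral_eq_integral_of_forall_compl_eq_zero hvanish).symm
    _ = ∫ x in {x | c < f x}, (f x - c)⁺ ∂P := by rw [hS.restrict_eq]
    _ = ∫ x, (f x - c)⁺ ∂P := setIntegral_eq_integral_of_forall_compl_eq_zero hvanish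
  have hPpos : ∫ x, (f x - c)⁺ ∂P = ∫ x, (f x - c)⁺ ∂(P - Q) + ∫ x, (f x - c)⁺ ∂Q := by
    conv_lhs => rw [← Measure.sub_add_cancel_of_le hQP]
    exact integral_add_measure (hg Measure.sub_le).pos_part (hg hQP).pos_part
  have hQpos : ∫ x, (f x - c)⁺ ∂Q = ∫ x, f x - c ∂Q + ∫ x, (f x - c)⁻ ∂Q := calc
    ∫ x, (f x - c)⁺ ∂Q = ∫ x, (f x - c) + (f x - c)⁻ ∂Q :=
      integral_congr_ae (ae_of_all _ fun x => eq_add_of_sub_eq (posPart_sub_negPart _))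
    _ = _ := integral_add (hg hQP) (hg hQP).neg_part
  have hsubQ := hsub Q hQP
  rw [measureReal_def, hQS, ← measureReal_def] at hsubQ
  linarith [hsub S hS.le]

theorem IsSuperlevelTrim.integral_le [IsFiniteMeasure P] (hS : IsSuperlevelTrim P S f c)
    (hf : Integrable f P) (hQP : Q ≤ P) (hQS : Q univ = S univ) :
    ∫ x, f x ∂Q ≤ ∫ x, f x ∂S := by
  rw [hS.integral_eq hf hQP hQS]
  have : 0 ≤ ∫ x, (f x - c)⁺ ∂(P - Q) := integral_nonneg fun x => posPart_nonneg _
  have : 0 ≤ ∫ x, (f x - c)⁻ ∂Q := integral_nonneg fun x => negPart_nonneg _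
  linarith

theorem IsSuperlevelTrim.of_integral_eq [IsFiniteMeasure P] (hS : IsSuperlevelTrim P S f c)
    (hf : Integrable f P) (hQP : Q ≤ P) (hQS : Q univ = S univ)
    (heq : ∫ x, f x ∂Q = ∫ x, f x ∂S) : IsSuperlevelTrim P Q f c := by
  have : IsFiniteMeasure Q := isFiniteMeasure_of_le P hQP
  have hg : ∀ {μ}, μ ≤ P → Integrable (fun x => f x - c) μ := fun hμ =>
    (hf.sub (integrable_const c)).mono_measure hμ
  have hpos : 0 ≤ ∫ x, (f x - c)⁺ ∂(P - Q) := integral_nonneg fun x => posPart_nonneg _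
  have hneg : 0 ≤ ∫ x, (f x - c)⁻ ∂Q := integral_nonneg fun x => negPart_nonneg _
  have hsum := hS.integral_eq hf hQP hQS
  have hpos0 : ∫ x, (f x - c)⁺ ∂(P - Q) = 0 := by linarith
  have hneg0 : ∫ x, (f x - c)⁻ ∂Q = 0 := by linarith
  rw [integral_eq_zero_iff_of_nonneg (fun x => posPart_nonneg _) (hg Measure.sub_le).pos_part,
    EventuallyEq, ae_iff] at hpos0
  rw [integral_eq_zero_iff_of_nonneg (fun x => negPart_nonneg _) (hg hQP).neg_part,
    EventuallyEq, ae_iff] at hneg0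
  have hnull : (P - Q) {x | c < f x} = 0 :=
    measure_mono_null (fun x (hx : c < f x) => (posPart_pos (sub_pos.2 hx)).ne') hpos0
  refine ⟨hQP, ?_,
    measure_mono_null (fun x (hx : f x < c) => (negPart_pos (sub_neg.2 hx)).ne') hneg0⟩
  conv_rhs => rw [← Measure.sub_add_cancel_of_le hQP]
  rw [Measure.restrict_add, Measure.restrict_eq_zero.2 hnull, zero_add]

end SuperlevelTrim

theorem integrable_of_lintegral_ofReal_norm_sq_lt_top {α F : Type*} [MeasurableSpace α]
    [NormedAddCommGroup F] {μ : Measure α} [IsFiniteMeasure μ] {g : α → F}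
    (hg : AEStronglyMeasurable g μ) (hg2 : ∫⁻ x, ENNReal.ofReal (‖g x‖ ^ 2) ∂μ < ⊤) :
    Integrable g μ := by
  have hsq : Integrable (fun x => ‖g x‖ ^ 2) μ :=
    ⟨by fun_prop, (hasFiniteIntegral_iff_ofReal (ae_of_all _ fun _ => by positivity)).2 hg2⟩
  exact ((memLp_two_iff_integrable_sq_norm hg).2 hsq).integrable one_le_two

section LocalMeans

variable {d : ℕ} {P Q : Measure (Ed d)} {h : ℝ} {v : Ed d}

theorem inner_mMean_smul (hh : 0 ≤ h) (hQ : Integrable (fun y => y) Q) :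
    ⟪mMean ((ENNReal.ofReal h)⁻¹ • Q), v⟫ = h⁻¹ * ∫ y, ⟪y, v⟫ ∂Q := by
  rw [mMean, integral_smul_measure, real_inner_smul_left, ENNReal.toReal_inv,
    ENNReal.toReal_ofReal hh, real_inner_comm, ← integral_inner hQ]
  simp_rw [real_inner_comm v]

theorem smul_mem_PlocInf (hQ : IsSuperlevelTrim P Q (⟪·, v⟫) (cInf P h v))
    (hQh : Q univ = ENNReal.ofReal h) : (ENNReal.ofReal h)⁻¹ • Q ∈ PlocInf P h v :=
  ⟨Q, rfl, hQ.le, hQh, fun A hA => by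
    rw [← Measure.restrict_eq_self Q hA, hQ.restrict_eq, Measure.restrict_eq_self P hA],
    hQ.measure_lt_eq_zero⟩

theorem dtmRadius_eq_zero_of_subsingleton [Subsingleton (Ed d)] [IsProbabilityMeasure P]
    (hh1 : h < 1) (x : Ed d) : dtmRadius P h x = 0 := by
  have : {r : ℝ | 0 < r ∧ ENNReal.ofReal h < P (closedBall x r)} = Ioi 0 := by
    ext r
    refine ⟨And.left, fun hr => ⟨hr, ?_⟩⟩
    rw [Subsingleton.eq_univ_of_nonempty ⟨x, mem_closedBall_self (le_of_lt hr)⟩, measure_univ]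
    exact ENNReal.ofReal_lt_one.2 hh1
  rw [dtmRadius, this, csInf_Ioi]

theorem smul_mem_PlocPt_of_subsingleton [Subsingleton (Ed d)] [IsProbabilityMeasure P]
    (hh1 : h < 1) (hQP : Q ≤ P) (hQh : Q univ = ENNReal.ofReal h) (x : Ed d) :
    (ENNReal.ofReal h)⁻¹ • Q ∈ PlocPt P h x := by
  refine ⟨Q, rfl, hQP, hQh, fun A hA => ?_, ?_⟩
  · rw [dtmRadius_eq_zero_of_subsingleton hh1, ball_zero, subset_empty_iff] at hA
    simp [hA]
  · rw [dtmRadius_eq_zero_of_subsingleton hh1, closedBall_zero,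
      Subsingleton.eq_univ_of_nonempty (singleton_nonempty x), compl_univ, measure_empty]

theorem exists_le_of_mem_Mset {m : Ed d} (hm : m ∈ Mset P h) :
    ∃ Q ≤ P, Q univ = ENNReal.ofReal h ∧ m = mMean ((ENNReal.ofReal h)⁻¹ • Q) := by
  rcases hm with ⟨x, μ, ⟨Q, rfl, hQP, hQh, -⟩, rfl⟩ | ⟨v, -, μ, ⟨Q, rfl, hQP, hQh, -⟩, rfl⟩ <;>
    exact ⟨Q, hQP, hQh, rfl⟩

theorem mMean_smul_mem_convexHull_Mset [IsProbabilityMeasure P]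
    (hP : Integrable (fun y => y) P) (hh : 0 < h) (hh1 : h < 1) (hQP : Q ≤ P)
    (hQh : Q univ = ENNReal.ofReal h) :
    mMean ((ENNReal.ofReal h)⁻¹ • Q) ∈ convexHull ℝ (Mset P h) := by
  rcases subsingleton_or_nontrivial (Ed d) with _ | _
  · exact subset_convexHull ℝ _ (Or.inl ⟨0, _, smul_mem_PlocPt_of_subsingleton hh1 hQP hQh 0, rfl⟩)
  by_contra hm
  obtain ⟨v, hv, hsep⟩ := exists_norm_eq_one_forall_inner_le_of_notMem_interior
    (convex_convexHull ℝ _) fun hint => hm (interior_subset hint)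
  obtain ⟨S, hS, hSh⟩ := exists_isSuperlevelTrim_sSup (P := P) (f := (⟪·, v⟫)) (by fun_prop)
    (ENNReal.ofReal_pos.2 hh) (by simpa using hh1)
  have hint : Integrable (⟪·, v⟫) P := hP.inner_const v
  have hle : ∫ y, ⟪y, v⟫ ∂S ≤ ∫ y, ⟪y, v⟫ ∂Q := by
    have := hsep _ (subset_convexHull ℝ _ (Or.inr ⟨v, hv, _, smul_mem_PlocInf hS hSh, rfl⟩))
    rwa [inner_mMean_smul hh.le (hP.mono_measure hS.le), inner_mMean_smul hh.le
      (hP.mono_measure hQP), mul_le_mul_iff_right₀ (inv_pos.2 hh)] at this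
  have hQS : Q univ = S univ := hQh.trans hSh.symm
  have hQ := hS.of_integral_eq hint hQP hQS (le_antisymm (hS.integral_le hint hQP hQS) hle)
  exact hm (subset_convexHull ℝ _ (Or.inr ⟨v, hv, _, smul_mem_PlocInf hQ hQh, rfl⟩))

theorem exists_le_smul_eq_of_le (hh : 0 < h) {h' : ℝ} (hhh' : h ≤ h') {Q' : Measure (Ed d)}
    (hQ'P : Q' ≤ P) (hQ'h' : Q' univ = ENNReal.ofReal h') :
    ∃ Q ≤ P, Q univ = ENNReal.ofReal h ∧
      (ENNReal.ofReal h)⁻¹ • Q = (ENNReal.ofReal h')⁻¹ • Q' := by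
  have hh'0 : ENNReal.ofReal h' ≠ 0 := (ENNReal.ofReal_pos.2 (hh.trans_le hhh')).ne'
  have hh0 : ENNReal.ofReal h ≠ 0 := (ENNReal.ofReal_pos.2 hh).ne'
  refine ⟨(ENNReal.ofReal h / ENNReal.ofReal h') • Q', ?_, ?_, ?_⟩
  · refine le_trans (Measure.le_iff'.2 fun s => mul_le_of_le_one_left' ?_) hQ'P
    exact ENNReal.div_le_of_le_mul (by rw [one_mul]; exact ENNReal.ofReal_le_ofReal hhh')
  · rw [Measure.smul_apply, hQ'h', smul_eq_mul, ENNReal.div_mul_cancel hh'0 ENNReal.ofReal_ne_top]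
  · rw [smul_smul, div_eq_mul_inv, ← mul_assoc, ENNReal.inv_mul_cancel hh0 ENNReal.ofReal_ne_top,
      one_mul]

end LocalMeans

/-- monotonicity of the convex hulls of the local means sets. -/
theorem stmt_3 {d : ℕ} (P : Measure (Ed d)) [IsProbabilityMeasure P]
    (hP2 : ∫⁻ u, ENNReal.ofReal (‖u‖ ^ 2) ∂P < ⊤)
    (h h' : ℝ) (hh : 0 < h) (hhh' : h < h') (hh'1 : h' ≤ 1) :
    convexHull ℝ (Mset P h') ⊆ convexHull ℝ (Mset P h) := by
  have hP : Integrable (fun u => u) P :=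
    integrable_of_lintegral_ofReal_norm_sq_lt_top aestronglyMeasurable_id hP2
  refine convexHull_min (fun m hm => ?_) (convex_convexHull ℝ _)
  obtain ⟨Q', hQ'P, hQ'h', rfl⟩ := exists_le_of_mem_Mset hm
  obtain ⟨Q, hQP, hQh, hQQ'⟩ := exists_le_smul_eq_of_le hh hhh'.le hQ'P hQ'h'
  rw [← hQQ']
  exact mMean_smul_mem_convexHull_Mset hP hh (hhh'.trans_le hh'1) hQP hQh
end

section
/- Let x₁,…,x_n be n points of ℝ^d in general position, meaning that every subset of them of cardinality at most d+1 is affinely independent. Let P_n := (1/n)∑_{i=1}^n δ_{x_i} be the uniform measure on these points, let q ∈ {1,…,n} and h := q/n. Then the set M_h(P_n) is a convex subset of ℝ^d. -/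
open MeasureTheory ENNReal Set Metric

/-!
A sub-measure of `P_n` of mass `q/n` puts at most `k/n` on an atom holding `k` sample points, so
every element of `M_h(P_n)` is a capped mean `q⁻¹ • ∑ i, w i • x i` with `0 ≤ w ≤ 1` and
`∑ i, w i = q`. Conversely, when `q < n`, represent a capped mean by the weights minimizing
`∑ i, w i * ‖x i‖ ^ 2`. Linear programming duality (Farkas' lemma) turns optimality into a center
`p` such that every weighted point is at least as close to `p` as every unsaturated one; counting
sample points in balls about `p` then shows that `w` is saturated inside the open ball of radius
`δ_{P_n,h}(p)` and vanishes outside the closed one, so `Q = n⁻¹ • ∑ i, w i • δ_{x i}` gives the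
element `h⁻¹ • Q` of `𝒫_{p,h}(P_n)`. Hence `M_h(P_n)` is a linear image of a polytope when
`q < n`, and has at most one point when `q = n`.
-/

section ConicSpan

variable {ι F : Type*} [AddCommGroup F] [Module ℝ F]

def conicSpan (v : ι → F) (s : Finset ι) : Set F :=
  {y | ∃ l : ι → ℝ, (∀ k ∈ s, 0 ≤ l k) ∧ ∑ k ∈ s, l k • v k = y}

theorem conicSpan_mono (v : ι → F) {s t : Finset ι} (h : s ⊆ t) :
    conicSpan v s ⊆ conicSpan v t := by
  classical
  rintro y ⟨l, hl, rfl⟩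
  refine ⟨fun k => if k ∈ s then l k else 0, fun k _ => ?_, ?_⟩
  · dsimp only
    split_ifs with hk
    exacts [hl k hk, le_rfl]
  · rw [← Finset.sum_subset h fun k _ hk => by simp [hk]]
    exact Finset.sum_congr rfl fun k hk => by simp [hk]

theorem smul_mem_conicSpan (v : ι → F) (s : Finset ι) {c : ℝ} (hc : 0 ≤ c) {y : F}
    (hy : y ∈ conicSpan v s) : c • y ∈ conicSpan v s := by
  obtain ⟨l, hl, rfl⟩ := hy
  exact ⟨c • l, fun k hk => mul_nonneg hc (hl k hk), by simp [Finset.smul_sum, mul_smul]⟩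

theorem convex_conicSpan (v : ι → F) (s : Finset ι) : Convex ℝ (conicSpan v s) := by
  rintro _ ⟨l₁, hl₁, rfl⟩ _ ⟨l₂, hl₂, rfl⟩ a b ha hb -
  refine ⟨a • l₁ + b • l₂, fun k hk => ?_, ?_⟩
  · exact add_nonneg (mul_nonneg ha (hl₁ k hk)) (mul_nonneg hb (hl₂ k hk))
  · simp [add_smul, mul_smul, Finset.sum_add_distrib, Finset.smul_sum]

/-- Conic Carathéodory: a linear relation among the generators lets one push some coefficient of a
nonnegative combination down to zero. -/
theorem conicSpan_subset_biUnion_erase [DecidableEq ι] (v : ι → F) {s : Finset ι}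
    (h : ¬LinearIndepOn ℝ v s) : conicSpan v s ⊆ ⋃ i ∈ s, conicSpan v (s.erase i) := by
  obtain ⟨μ, hμ, i, hi, hμi⟩ : ∃ μ : ι → ℝ, ∑ k ∈ s, μ k • v k = 0 ∧ ∃ i ∈ s, 0 < μ i := by
    obtain ⟨μ, hμ, i, hi, hμi⟩ := not_linearIndepOn_finset_iff.mp h
    rcases hμi.lt_or_gt with hneg | hpos
    · exact ⟨-μ, by simp [hμ], i, hi, by simpa using hneg⟩
    · exact ⟨μ, hμ, i, hi, hpos⟩
  rintro y ⟨l, hl, rfl⟩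
  obtain ⟨j, hj, hmin⟩ := (s.filter (0 < μ ·)).exists_min_image (fun k => l k / μ k)
    ⟨i, Finset.mem_filter.mpr ⟨hi, hμi⟩⟩
  rw [Finset.mem_filter] at hj
  set τ := l j / μ j
  have hτ : 0 ≤ τ := div_nonneg (hl j hj.1) hj.2.le
  refine Set.mem_biUnion hj.1 ⟨fun k => l k - τ * μ k, fun k hk => ?_, ?_⟩
  · have hks := Finset.mem_of_mem_erase hk
    rcases lt_or_ge 0 (μ k) with hμk | hμk
    · have := hmin k (Finset.mem_filter.mpr ⟨hks, hμk⟩)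
      rw [le_div_iff₀ hμk] at this
      linarith
    · nlinarith [hl k hks]
  · rw [Finset.sum_erase s (by simp [τ, div_mul_cancel₀ _ hj.2.ne']), ← sub_eq_zero]
    simp [sub_smul, mul_smul, Finset.sum_sub_distrib, ← Finset.smul_sum, hμ]

variable [TopologicalSpace F] [IsTopologicalAddGroup F] [ContinuousSMul ℝ F] [T2Space F]

theorem isClosed_conicSpan_of_linearIndepOn {v : ι → F} {s : Finset ι}
    (h : LinearIndepOn ℝ v s) : IsClosed (conicSpan v s) := by
  classical
  let L := Fintype.linearCombination ℝ (fun k : s => v k)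
  have hL : Topology.IsClosedEmbedding L := L.isClosedEmbedding_of_injective
    (LinearMap.ker_eq_bot.mpr (linearIndependent_iff_injective_fintypeLinearCombination.mp h))
  have hspan : conicSpan v s = L '' Set.Ici 0 := by
    ext y
    constructor
    · rintro ⟨l, hl, rfl⟩
      refine ⟨fun k => l k, fun k => hl k k.2, ?_⟩
      simpa [L, Fintype.linearCombination_apply] using Finset.sum_attach s (fun k => l k • v k)
    · rintro ⟨c, hc, rfl⟩
      refine ⟨fun k => if hk : k ∈ s then c ⟨k, hk⟩ else 0,
        fun k hk => by simpa [hk] using hc ⟨k, hk⟩, ?_⟩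
      rw [← Finset.sum_coe_sort s]
      simp [L, Fintype.linearCombination_apply]
  rw [hspan]
  exact hL.isClosedMap _ isClosed_Ici

theorem isClosed_conicSpan (v : ι → F) (s : Finset ι) : IsClosed (conicSpan v s) := by
  classical
  induction s using Finset.strongInduction with
  | H s ih =>
    by_cases h : LinearIndepOn ℝ v s
    · exact isClosed_conicSpan_of_linearIndepOn h
    · rw [(conicSpan_subset_biUnion_erase v h).antisymm
        (Set.iUnion₂_subset fun i _ => conicSpan_mono v (s.erase_subset i))]
      exact isClosed_biUnion_finset fun i hi => ih _ (Finset.erase_ssubset hi)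

end ConicSpan

open scoped InnerProductSpace in
/-- Farkas' lemma. -/
theorem exists_inner_le_of_forall_sum_nonneg {ι E : Type*} [Fintype ι] [NormedAddCommGroup E]
    [InnerProductSpace ℝ E] [CompleteSpace E] (u : ι → E) (z : ι → ℝ)
    (H : ∀ l : ι → ℝ, (∀ k, 0 ≤ l k) → ∑ k, l k • u k = 0 → 0 ≤ ∑ k, l k * z k) :
    ∃ a : E, ∀ k, ⟪a, u k⟫_ℝ ≤ z k := by
  classical
  -- the cone generated by the `(u k, z k)` and `(0, 1)` misses `(0, -1)`
  let g : Option ι → E × ℝ := fun o => o.elim (0, 1) fun k => (u k, z k)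
  let C := conicSpan g Finset.univ
  have hC : ((0 : E), (-1 : ℝ)) ∉ C := by
    rintro ⟨l, hl, hsum⟩
    rw [Fintype.sum_option] at hsum
    simp only [Option.elim, g, Prod.ext_iff, Prod.fst_add, Prod.snd_add, Prod.fst_sum,
      Prod.snd_sum, Prod.smul_mk, smul_zero, smul_eq_mul, mul_one, zero_add] at hsum
    have := H (fun k => l (some k)) (fun k => hl _ (Finset.mem_univ _)) hsum.1
    linarith [hl none (Finset.mem_univ _)]
  obtain ⟨f, c, hfC, hcf⟩ :=
    geometric_hahn_banach_closed_point (convex_conicSpan g _) (isClosed_conicSpan g _) hC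
  have hc : 0 < c := by simpa using hfC 0 ⟨0, by simp⟩
  have hf_nonpos : ∀ y ∈ C, f y ≤ 0 := by
    intro y hy
    by_contra! hpos
    have := hfC _ (smul_mem_conicSpan g _ (div_nonneg hc.le hpos.le) hy)
    rw [map_smul, smul_eq_mul, div_mul_cancel₀ _ hpos.ne'] at this
    exact lt_irrefl _ this
  set β := f (0, -1)
  have hβ : 0 < β := hc.trans hcf
  refine ⟨(InnerProductSpace.toDual ℝ E).symm (β⁻¹ • f.comp (.inl ℝ E ℝ)), fun k => ?_⟩
  have hk := hf_nonpos (u k, z k) ⟨fun o => if o = some k then 1 else 0,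
    fun o _ => by dsimp only; split_ifs <;> norm_num, by simp [g]⟩
  have hsplit : (u k, z k) = ((u k, 0) : E × ℝ) - z k • ((0 : E), (-1 : ℝ)) := by simp
  rw [hsplit, map_sub, map_smul, smul_eq_mul] at hk
  rw [InnerProductSpace.toDual_symm_apply]
  change β⁻¹ * f (u k, 0) ≤ z k
  rw [inv_mul_le_iff₀ hβ]
  linarith

section NetFlow

variable {κ ι M : Type*} [Fintype κ] [DecidableEq ι] [AddCommGroup M] [Module ℝ M]

def netFlow (e : κ → ι × ι) (l : κ → ℝ) (k : ι) : ℝ :=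
  ∑ p with (e p).2 = k, l p - ∑ p with (e p).1 = k, l p

theorem sum_fiberwise_smul [Fintype ι] (g : κ → ι) (l : κ → ℝ) (c : ι → M) :
    ∑ k, (∑ p with g p = k, l p) • c k = ∑ p, l p • c (g p) := by
  simp_rw [Finset.sum_smul]
  rw [← Finset.sum_fiberwise Finset.univ g]
  exact Finset.sum_congr rfl fun k _ => Finset.sum_congr rfl fun p hp => by
    rw [(Finset.mem_filter.mp hp).2]

theorem sum_netFlow_smul [Fintype ι] (e : κ → ι × ι) (l : κ → ℝ) (c : ι → M) :
    ∑ k, netFlow e l k • c k = ∑ p, l p • (c (e p).2 - c (e p).1) := by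
  simp only [netFlow, sub_smul, Finset.sum_sub_distrib, smul_sub]
  rw [sum_fiberwise_smul (fun p => (e p).2), sum_fiberwise_smul (fun p => (e p).1)]

theorem sum_netFlow [Fintype ι] (e : κ → ι × ι) (l : κ → ℝ) : ∑ k, netFlow e l k = 0 := by
  simpa using sum_netFlow_smul e l (fun _ => (1 : ℝ))

theorem exists_snd_eq_of_netFlow_pos {e : κ → ι × ι} {l : κ → ℝ} (hl : ∀ p, 0 ≤ l p) {k : ι}
    (h : 0 < netFlow e l k) : ∃ p, (e p).2 = k := by
  have hout : 0 ≤ ∑ p with (e p).1 = k, l p := Finset.sum_nonneg fun p _ => hl p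
  obtain ⟨p, hp⟩ := Finset.nonempty_of_sum_ne_zero
    (s := Finset.univ.filter fun p => (e p).2 = k) (f := l) (by unfold netFlow at h; linarith)
  exact ⟨p, (Finset.mem_filter.mp hp).2⟩

theorem exists_fst_eq_of_netFlow_neg {e : κ → ι × ι} {l : κ → ℝ} (hl : ∀ p, 0 ≤ l p) {k : ι}
    (h : netFlow e l k < 0) : ∃ p, (e p).1 = k := by
  have hin : 0 ≤ ∑ p with (e p).2 = k, l p := Finset.sum_nonneg fun p _ => hl p
  obtain ⟨p, hp⟩ := Finset.nonempty_of_sum_ne_zero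
    (s := Finset.univ.filter fun p => (e p).1 = k) (f := l) (by unfold netFlow at h; linarith)
  exact ⟨p, (Finset.mem_filter.mp hp).2⟩

end NetFlow

open Filter Topology in
theorem eventually_mul_le {a c : ℝ} (hc : 0 ≤ c) (ha : 0 < a → 0 < c) :
    ∀ᶠ ε in 𝓝[>] (0 : ℝ), ε * a ≤ c := by
  rcases hc.eq_or_lt with rfl | hc
  · have ha : a ≤ 0 := not_lt.mp fun h => (ha h).false
    filter_upwards [self_mem_nhdsWithin] with ε (hε : 0 < ε)
    nlinarith
  · have : Tendsto (fun ε : ℝ => ε * a) (𝓝[>] 0) (𝓝 0) :=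
      ((continuous_mul_const a).tendsto' 0 0 (zero_mul a)).mono_left nhdsWithin_le_nhds
    exact (this.eventually (gt_mem_nhds hc)).mono fun _ h => h.le

open Filter Topology in
theorem exists_pos_forall_add_mul_mem_Icc {ι : Type*} [Finite ι] {w η : ι → ℝ}
    (hw : ∀ k, w k ∈ Set.Icc 0 1) (hup : ∀ k, 0 < η k → w k < 1) (hdown : ∀ k, η k < 0 → 0 < w k) :
    ∃ ε > 0, ∀ k, w k + ε * η k ∈ Set.Icc 0 1 := by
  have h : ∀ᶠ ε in 𝓝[>] (0 : ℝ), 0 < ε ∧ ∀ k, ε * η k ≤ 1 - w k ∧ ε * -η k ≤ w k :=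
    (eventually_mem_nhdsWithin (s := Set.Ioi 0)).and <| eventually_all.2 fun k =>
      (eventually_mul_le (by linarith [(hw k).2]) fun h => by linarith [hup k h]).and
      (eventually_mul_le (hw k).1 fun h => hdown k (by linarith))
  obtain ⟨ε, hε, hk⟩ := h.exists
  exact ⟨ε, hε, fun k => ⟨by linarith [hk k, (hw k).1], by linarith [hk k]⟩⟩

section CappedWeights

variable {ι E : Type*} [Fintype ι]

variable (ι) in
def cappedWeights (q : ℝ) : Set (ι → ℝ) := Set.Icc 0 1 ∩ {w | ∑ i, w i = q}

def cappedMeans [AddCommGroup E] [Module ℝ E] (x : ι → E) (q : ℝ) : Set E :=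
  (fun w => q⁻¹ • ∑ i, w i • x i) '' cappedWeights ι q

theorem convex_cappedMeans [AddCommGroup E] [Module ℝ E] (x : ι → E) (q : ℝ) :
    Convex ℝ (cappedMeans x q) := by
  have hsum : Convex ℝ {w : ι → ℝ | ∑ i, w i = q} := by
    intro w (hw : ∑ i, w i = q) w' (hw' : ∑ i, w' i = q) a b _ _ hab
    change ∑ i, (a • w + b • w') i = q
    simp only [Pi.add_apply, Pi.smul_apply, smul_eq_mul, Finset.sum_add_distrib, ← Finset.mul_sum]
    rw [hw, hw', ← add_mul, hab, one_mul]
  convert ((convex_Icc 0 1).inter hsum).linear_image (q⁻¹ • Fintype.linearCombination ℝ x) using 1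
  congr 1

theorem cappedMeans_card_subsingleton [AddCommGroup E] [Module ℝ E] (x : ι → E) :
    (cappedMeans x (Fintype.card ι)).Subsingleton := by
  have h : cappedWeights ι (Fintype.card ι) ⊆ {1} := by
    rintro w ⟨⟨-, hw1⟩, hsum⟩
    have := (Finset.sum_eq_sum_iff_of_le fun i _ => hw1 i).mp (by rw [hsum]; simp)
    exact funext fun i => this i (Finset.mem_univ i)
  exact ((Set.subsingleton_singleton).anti h).image _

open scoped InnerProductSpace

variable [NormedAddCommGroup E] [InnerProductSpace ℝ E]

/-- Moving mass along an edge `i → j` with `0 < w i` and `w j < 1` cannot decrease the objective;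
Farkas' lemma turns these conditions into one dual vector `a`. -/
theorem exists_inner_le_of_isMinOn [CompleteSpace E] {x : ι → E} {b : ι → ℝ} {q : ℝ}
    {w : ι → ℝ} (hw : w ∈ cappedWeights ι q)
    (hmin : IsMinOn (fun w' => ∑ i, w' i * b i)
      {w' ∈ cappedWeights ι q | ∑ i, w' i • x i = ∑ i, w i • x i} w) :
    ∃ a : E, ∀ i j, 0 < w i → w j < 1 → b i - ⟪a, x i⟫_ℝ ≤ b j - ⟪a, x j⟫_ℝ := by
  classical
  let A := {p : ι × ι // 0 < w p.1 ∧ w p.2 < 1}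
  let e : A → ι × ι := Subtype.val
  suffices H : ∀ l : A → ℝ, (∀ p, 0 ≤ l p) → ∑ p, l p • (x (e p).2 - x (e p).1) = 0 →
      0 ≤ ∑ p, l p * (b (e p).2 - b (e p).1) by
    obtain ⟨a, ha⟩ := exists_inner_le_of_forall_sum_nonneg _ _ H
    refine ⟨a, fun i j hi hj => ?_⟩
    have := ha ⟨(i, j), hi, hj⟩
    rw [inner_sub_right] at this
    linarith
  intro l hl hlx
  obtain ⟨ε, hε, hεw⟩ := exists_pos_forall_add_mul_mem_Icc (η := netFlow e l)
    (fun k => ⟨hw.1.1 k, hw.1.2 k⟩)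
    (fun k hk => by obtain ⟨p, rfl⟩ := exists_snd_eq_of_netFlow_pos hl hk; exact p.2.2)
    (fun k hk => by obtain ⟨p, rfl⟩ := exists_fst_eq_of_netFlow_neg hl hk; exact p.2.1)
  have hmem : w + ε • netFlow e l ∈
      {w' ∈ cappedWeights ι q | ∑ i, w' i • x i = ∑ i, w i • x i} := by
    refine ⟨⟨⟨fun k => (hεw k).1, fun k => (hεw k).2⟩, ?_⟩, ?_⟩
    · simpa [Finset.sum_add_distrib, ← Finset.mul_sum, sum_netFlow] using hw.2
    · simp [add_smul, mul_smul, Finset.sum_add_distrib, ← Finset.smul_sum, sum_netFlow_smul, hlx]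
  have hle : ∑ i, w i * b i ≤ ∑ i, (w + ε • netFlow e l) i * b i := hmin hmem
  simp only [Pi.add_apply, Pi.smul_apply, smul_eq_mul, add_mul, mul_assoc,
    Finset.sum_add_distrib, ← Finset.mul_sum, le_add_iff_nonneg_right] at hle
  have hflow := sum_netFlow_smul e l b
  simp only [smul_eq_mul] at hflow
  rw [← hflow]
  exact nonneg_of_mul_nonneg_right hle hε

theorem exists_dist_le_of_isMinOn [CompleteSpace E] {x : ι → E} {q : ℝ} {w : ι → ℝ}
    (hw : w ∈ cappedWeights ι q)
    (hmin : IsMinOn (fun w' => ∑ i, w' i * ‖x i‖ ^ 2)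
      {w' ∈ cappedWeights ι q | ∑ i, w' i • x i = ∑ i, w i • x i} w) :
    ∃ p : E, ∀ i j, 0 < w i → w j < 1 → dist (x i) p ≤ dist (x j) p := by
  obtain ⟨a, ha⟩ := exists_inner_le_of_isMinOn hw hmin
  refine ⟨(2 : ℝ)⁻¹ • a, fun i j hi hj => ?_⟩
  have hdist : ∀ k,
      dist (x k) ((2 : ℝ)⁻¹ • a) ^ 2 = ‖x k‖ ^ 2 - ⟪a, x k⟫_ℝ + ‖(2 : ℝ)⁻¹ • a‖ ^ 2 := by
    intro k
    rw [dist_eq_norm, norm_sub_sq_real, real_inner_smul_right, real_inner_comm]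
    ring
  rw [← sq_le_sq₀ dist_nonneg dist_nonneg, hdist, hdist]
  linarith [ha i j hi hj]

theorem exists_center_of_mem_cappedMeans [CompleteSpace E] {x : ι → E} {q : ℝ} {m : E}
    (hm : m ∈ cappedMeans x q) :
    ∃ w ∈ cappedWeights ι q, m = q⁻¹ • ∑ i, w i • x i ∧
      ∃ p : E, ∀ i j, 0 < w i → w j < 1 → dist (x i) p ≤ dist (x j) p := by
  obtain ⟨w₀, hw₀, rfl⟩ := hm
  let S := {w ∈ cappedWeights ι q | ∑ i, w i • x i = ∑ i, w₀ i • x i}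
  have hS : IsCompact S := (isCompact_Icc.inter_right (isClosed_eq
    (continuous_finsetSum _ fun i _ => continuous_apply i) continuous_const)).inter_right
    (isClosed_eq (continuous_finsetSum _ fun i _ => (continuous_apply i).smul continuous_const)
      continuous_const)
  obtain ⟨w, ⟨hw, hwx⟩, hmin⟩ := hS.exists_isMinOn (f := fun w => ∑ i, w i * ‖x i‖ ^ 2)
    ⟨w₀, hw₀, rfl⟩ (by fun_prop)
  refine ⟨w, hw, by rw [hwx], exists_dist_le_of_isMinOn hw ?_⟩
  simpa only [hwx] using hmin

end CappedWeights

open Finset in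
theorem sum_inv_card_fiber_smul {ι α M : Type*} [Fintype ι] [DecidableEq α] [AddCommGroup M]
    [Module ℝ M] (x : ι → α) (f : α → M) :
    ∑ i, (#{j | x j = x i} : ℝ)⁻¹ • f (x i) = ∑ a ∈ Finset.univ.image x, f a := by
  refine (Finset.sum_image' _ fun i _ => ?_).symm
  have hfiber : ∀ j ∈ ({j | x j = x i} : Finset ι),
      (#{k | x k = x j} : ℝ)⁻¹ • f (x j) = (#{k | x k = x i} : ℝ)⁻¹ • f (x i) :=
    fun j hj => by rw [(Finset.mem_filter.mp hj).2]
  have hcard : (#{j | x j = x i} : ℝ) ≠ 0 :=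
    Nat.cast_ne_zero.mpr (Finset.card_ne_zero_of_mem (Finset.mem_filter.mpr ⟨mem_univ i, rfl⟩))
  rw [Finset.sum_congr rfl hfiber, Finset.sum_const, ← Nat.cast_smul_eq_nsmul ℝ, smul_smul,
    mul_inv_cancel₀ hcard, one_smul]

section Measure

theorem integral_id_sum_smul_dirac {ι E : Type*} [NormedAddCommGroup E] [NormedSpace ℝ E]
    [CompleteSpace E] [MeasurableSpace E] [MeasurableSingletonClass E] (s : Finset ι)
    (x : ι → E) (c : ι → ℝ≥0∞) (hc : ∀ i ∈ s, c i ≠ ∞) :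
    ∫ u, u ∂(∑ i ∈ s, c i • Measure.dirac (x i)) = ∑ i ∈ s, (c i).toReal • x i := by
  rw [integral_finsetSum_measure fun i hi => (integrable_dirac enorm_lt_top).smul_measure (hc i hi)]
  exact Finset.sum_congr rfl fun i _ => by rw [integral_smul_measure, integral_dirac]

theorem MeasureTheory.Measure.eq_sum_smul_dirac_of_measure_compl_eq_zero {α : Type*}
    [MeasurableSpace α] [MeasurableSingletonClass α] {μ : Measure α} {S : Finset α}
    (h : μ (↑S)ᶜ = 0) : μ = ∑ a ∈ S, μ {a} • Measure.dirac a := by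
  classical
  ext A hA
  have hcoe : A ∩ ↑S = ↑(S.filter (· ∈ A)) := by ext; simp [and_comm]
  rw [← measure_inter_conull h, hcoe, ← sum_measure_singleton, Finset.sum_filter,
    Measure.finsetSum_apply]
  refine Finset.sum_congr rfl fun a _ => ?_
  simp [Measure.dirac_apply' _ hA, Set.indicator_apply]

end Measure

section Empirical

open Finset

variable {d n : ℕ}

noncomputable def empiricalMeasure (x : Fin n → Ed d) : Measure (Ed d) :=
  (n : ℝ≥0∞)⁻¹ • ∑ i, Measure.dirac (x i)

theorem empiricalMeasure_apply (x : Fin n → Ed d) (A : Set (Ed d)) :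
    empiricalMeasure x A = (n : ℝ≥0∞)⁻¹ * ∑ i, A.indicator 1 (x i) := by
  simp [empiricalMeasure, Measure.finsetSum_apply, Measure.dirac_apply]

theorem empiricalMeasure_closedBall (x : Fin n → Ed d) (p : Ed d) (r : ℝ) :
    empiricalMeasure x (closedBall p r) = #{i | dist (x i) p ≤ r} / n := by
  classical
  rw [empiricalMeasure_apply, ENNReal.div_eq_inv_mul, Finset.card_filter]
  push_cast
  congr 1

theorem empiricalMeasure_singleton (x : Fin n → Ed d) (a : Ed d) :
    empiricalMeasure x {a} = #{i | x i = a} / n := by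
  classical
  rw [empiricalMeasure_apply, ENNReal.div_eq_inv_mul, Finset.card_filter]
  push_cast
  congr 1
  exact Finset.sum_congr rfl fun i _ => by simp [Set.indicator_apply]

theorem ofReal_div_lt_empiricalMeasure_closedBall_iff (hn : 0 < n) (x : Fin n → Ed d) (q : ℕ)
    (p : Ed d) (r : ℝ) :
    ENNReal.ofReal ((q : ℝ) / n) < empiricalMeasure x (closedBall p r) ↔
      q < #{i | dist (x i) p ≤ r} := by
  rw [empiricalMeasure_closedBall, ENNReal.ofReal_div_of_pos (by exact_mod_cast hn),
    ENNReal.ofReal_natCast, ENNReal.ofReal_natCast,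
    ENNReal.div_lt_div_iff_left (by exact_mod_cast hn.ne') (ENNReal.natCast_ne_top n)]
  exact_mod_cast Iff.rfl

theorem card_dist_le_mono (x : Fin n → Ed d) (p : Ed d) {r r' : ℝ} (h : r ≤ r') :
    #{i | dist (x i) p ≤ r} ≤ #{i | dist (x i) p ≤ r'} :=
  card_le_card (monotone_filter_right _ fun _ _ hi => hi.trans h)

theorem card_le_of_lt_dtmRadius (hn : 0 < n) {x : Fin n → Ed d} {q : ℕ} {p : Ed d} {r : ℝ}
    (hr₀ : 0 ≤ r) (hr : r < dtmRadius (empiricalMeasure x) (q / n) p) :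
    #{i | dist (x i) p ≤ r} ≤ q := by
  set δ := dtmRadius (empiricalMeasure x) (q / n) p
  by_contra! h
  have hmem : (r + δ) / 2 ∈ {r : ℝ | 0 < r ∧
      ENNReal.ofReal ((q : ℝ) / n) < empiricalMeasure x (closedBall p r)} :=
    ⟨by linarith, (ofReal_div_lt_empiricalMeasure_closedBall_iff hn x q p _).mpr
      (h.trans_le (card_dist_le_mono x p (by linarith)))⟩
  have : δ ≤ (r + δ) / 2 := csInf_le ⟨0, fun _ h => h.1.le⟩ hmem
  linarith

theorem lt_card_of_dtmRadius_lt {x : Fin n → Ed d} {q : ℕ} (hqn : q < n) {p : Ed d} {r : ℝ}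
    (hr : dtmRadius (empiricalMeasure x) (q / n) p < r) :
    q < #{i | dist (x i) p ≤ r} := by
  have hn : 0 < n := by omega
  obtain ⟨M, hM⟩ := (Set.finite_range fun i => dist (x i) p).bddAbove
  have hall : #{i | dist (x i) p ≤ max M 1} = n := by
    rw [Finset.filter_true_of_mem fun i _ => (hM ⟨i, rfl⟩).trans (le_max_left M 1),
      Finset.card_univ, Fintype.card_fin]
  obtain ⟨s, ⟨-, hs⟩, hsr⟩ := exists_lt_of_csInf_lt (s := {r : ℝ | 0 < r ∧
      ENNReal.ofReal ((q : ℝ) / n) < empiricalMeasure x (closedBall p r)})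
    ⟨max M 1, lt_max_of_lt_right one_pos,
      (ofReal_div_lt_empiricalMeasure_closedBall_iff hn x q p _).mpr (by rwa [hall])⟩ hr
  exact ((ofReal_div_lt_empiricalMeasure_closedBall_iff hn x q p s).mp hs).trans_le
    (card_dist_le_mono x p hsr.le)

theorem eq_one_of_dist_lt_dtmRadius (hn : 0 < n) {q : ℕ} {x : Fin n → Ed d} {w : Fin n → ℝ}
    (hw : w ∈ cappedWeights (Fin n) q) {p : Ed d}
    (hp : ∀ i j, 0 < w i → w j < 1 → dist (x i) p ≤ dist (x j) p) {i : Fin n}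
    (hi : dist (x i) p < dtmRadius (empiricalMeasure x) (q / n) p) : w i = 1 := by
  obtain ⟨⟨hw0, hw1⟩, hsum⟩ := hw
  change ∑ i, w i = q at hsum
  by_contra hne
  have hwi : w i < 1 := (hw1 i).lt_of_ne hne
  -- all the mass of `w` sits within distance `dist (x i) p`, yet `w i < 1` there
  have hcard := card_le_of_lt_dtmRadius hn dist_nonneg hi
  have hsupp : ∑ j with dist (x j) p ≤ dist (x i) p, w j = q := by
    rw [Finset.sum_filter_of_ne fun j _ hj => ?_, hsum]
    by_contra hfar
    exact hj (le_antisymm (not_lt.mp fun hj0 => hfar (hp j i hj0 hwi)) (hw0 j))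
  have hlt : ∑ j with dist (x j) p ≤ dist (x i) p, w j < #{j | dist (x j) p ≤ dist (x i) p} := by
    simpa using Finset.sum_lt_sum (fun j _ => hw1 j) ⟨i, by simp, hwi⟩
  rw [hsupp] at hlt
  exact absurd hcard (not_le.mpr (by exact_mod_cast hlt))

theorem dist_le_dtmRadius_of_pos {q : ℕ} (hqn : q < n) {x : Fin n → Ed d} {w : Fin n → ℝ}
    (hw : w ∈ cappedWeights (Fin n) q) {p : Ed d}
    (hp : ∀ i j, 0 < w i → w j < 1 → dist (x i) p ≤ dist (x j) p) {i : Fin n} (hi : 0 < w i) :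
    dist (x i) p ≤ dtmRadius (empiricalMeasure x) (q / n) p := by
  obtain ⟨⟨hw0, hw1⟩, hsum⟩ := hw
  change ∑ i, w i = q at hsum
  by_contra! hfar
  -- a ball strictly between the radius and `x i` holds more than `q` saturated points
  obtain ⟨r, hδr, hri⟩ := exists_between hfar
  have hcard := lt_card_of_dtmRadius_lt hqn hδr
  have hsat : ∀ j ∈ ({j | dist (x j) p ≤ r} : Finset (Fin n)), w j = 1 := by
    intro j hj
    by_contra hne
    have := hp i j hi ((hw1 j).lt_of_ne hne)
    linarith [(Finset.mem_filter.mp hj).2]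
  have hi_notMem : i ∉ ({j | dist (x j) p ≤ r} : Finset (Fin n)) := by
    simp only [Finset.mem_filter, Finset.mem_univ, true_and, not_le]
    linarith
  have hle := Finset.sum_le_sum_of_subset_of_nonneg (Finset.subset_univ
    (insert i ({j | dist (x j) p ≤ r} : Finset (Fin n)))) fun j _ _ => hw0 j
  rw [Finset.sum_insert hi_notMem, Finset.sum_congr rfl hsat, hsum] at hle
  have : (q : ℝ) < #{j | dist (x j) p ≤ r} := by exact_mod_cast hcard
  simp only [Finset.sum_const, nsmul_eq_mul, mul_one] at hle
  linarith

theorem smul_sum_smul_mem_Mset (hn : 0 < n) {q : ℕ} {x : Fin n → Ed d}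
    {w : Fin n → ℝ} (hw : w ∈ cappedWeights (Fin n) q) {p : Ed d}
    (hin : ∀ i, dist (x i) p < dtmRadius (empiricalMeasure x) (q / n) p → w i = 1)
    (hout : ∀ i, 0 < w i → dist (x i) p ≤ dtmRadius (empiricalMeasure x) (q / n) p) :
    (q : ℝ)⁻¹ • ∑ i, w i • x i ∈ Mset (empiricalMeasure x) (q / n) := by
  obtain ⟨⟨hw0, hw1⟩, hsum⟩ := hw
  change ∑ i, w i = q at hsum
  set Q : Measure (Ed d) := (n : ℝ≥0∞)⁻¹ • ∑ i, ENNReal.ofReal (w i) • Measure.dirac (x i)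
  have hQ : ∀ A, Q A = (n : ℝ≥0∞)⁻¹ * ∑ i, ENNReal.ofReal (w i) * A.indicator 1 (x i) := by
    intro A
    simp [Q, Measure.finsetSum_apply, Measure.dirac_apply]
  refine Or.inl ⟨p, (ENNReal.ofReal (q / n))⁻¹ • Q, ⟨Q, rfl, ?_, ?_, ?_, ?_⟩, ?_⟩
  · refine Measure.le_iff'.mpr fun A => ?_
    rw [hQ, empiricalMeasure_apply]
    gcongr with i
    exact mul_le_of_le_one_left zero_le (ENNReal.ofReal_le_one.mpr (hw1 i))
  · rw [hQ]
    simp only [Set.indicator_univ, Pi.one_apply, mul_one]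
    rw [← ENNReal.ofReal_sum_of_nonneg fun i _ => hw0 i, hsum,
      ENNReal.ofReal_div_of_pos (by exact_mod_cast hn), ENNReal.ofReal_natCast,
      ENNReal.ofReal_natCast, ENNReal.div_eq_inv_mul]
  · intro A hA
    rw [hQ, empiricalMeasure_apply]
    congr 1
    refine Finset.sum_congr rfl fun i _ => ?_
    by_cases hi : x i ∈ A
    · rw [hin i (mem_ball.mp (hA hi)), ENNReal.ofReal_one, one_mul]
    · simp [hi]
  · rw [hQ]
    refine mul_eq_zero_of_right _ (Finset.sum_eq_zero fun i _ => ?_)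
    by_cases hi : x i ∈ (closedBall p (dtmRadius (empiricalMeasure x) (q / n) p))ᶜ
    · have : w i ≤ 0 := not_lt.mp fun h => hi (mem_closedBall.mpr (hout i h))
      simp [ENNReal.ofReal_of_nonpos this]
    · simp [hi]
  · rw [mMean, integral_smul_measure, integral_smul_measure,
      integral_id_sum_smul_dirac _ _ _ fun i _ => ENNReal.ofReal_ne_top, ENNReal.toReal_inv,
      ENNReal.toReal_inv, ENNReal.toReal_ofReal (by positivity), ENNReal.toReal_natCast,
      Finset.smul_sum, Finset.smul_sum, Finset.smul_sum]
    refine Finset.sum_congr rfl fun i _ => ?_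
    rw [ENNReal.toReal_ofReal (hw0 i), smul_smul, smul_smul, smul_smul]
    congr 1
    field_simp

theorem natCast_mul_toReal_measure_singleton_le (hn : 0 < n) {x : Fin n → Ed d}
    {Q : Measure (Ed d)} (hQ : Q ≤ empiricalMeasure x) (a : Ed d) :
    n * (Q {a}).toReal ≤ #{i | x i = a} := by
  have h := ENNReal.toReal_mono (by simp [empiricalMeasure_singleton, ENNReal.div_eq_top, hn.ne'])
    (Measure.le_iff'.mp hQ {a})
  rw [empiricalMeasure_singleton, ENNReal.toReal_div, ENNReal.toReal_natCast,
    ENNReal.toReal_natCast, le_div_iff₀ (by exact_mod_cast hn)] at h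
  linarith

theorem mMean_mem_cappedMeans (hn : 0 < n) {q : ℕ} {x : Fin n → Ed d}
    {Q : Measure (Ed d)} (hQ : Q ≤ empiricalMeasure x)
    (hQ1 : Q Set.univ = ENNReal.ofReal (q / n)) :
    mMean ((ENNReal.ofReal (q / n))⁻¹ • Q) ∈ cappedMeans x q := by
  classical
  set S := Finset.univ.image x
  have : IsFiniteMeasure Q := ⟨by simp [hQ1]⟩
  have hS : Q (↑S)ᶜ = 0 :=
    le_zero_iff.mp ((Measure.le_iff'.mp hQ _).trans (by simp [empiricalMeasure_apply, S]))
  let ν : Ed d → ℝ := fun a => (Q {a}).toReal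
  have hνsum : ∑ a ∈ S, ν a = q / n := by
    rw [← ENNReal.toReal_sum fun a _ => measure_ne_top Q _, sum_measure_singleton,
      ← Set.univ_inter (S : Set (Ed d)), measure_inter_conull hS, hQ1,
      ENNReal.toReal_ofReal (by positivity)]
  -- the mass of each atom is split evenly among the sample points sitting at it
  refine ⟨fun i => (#{j | x j = x i} : ℝ)⁻¹ * (n * ν (x i)),
    ⟨⟨fun i => by positivity, fun i => ?_⟩, ?_⟩, ?_⟩
  · have hc : (0 : ℝ) < #{j | x j = x i} :=
      Nat.cast_pos.mpr (Finset.card_pos.mpr ⟨i, Finset.mem_filter.mpr ⟨mem_univ i, rfl⟩⟩)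
    rw [Pi.one_apply, inv_mul_le_iff₀ hc, mul_one]
    exact natCast_mul_toReal_measure_singleton_le hn hQ (x i)
  · change ∑ i, _ = _
    simp_rw [← smul_eq_mul]
    rw [sum_inv_card_fiber_smul x (fun a => (n : ℝ) • ν a), ← Finset.smul_sum, hνsum, smul_eq_mul]
    field_simp
  · change (q : ℝ)⁻¹ • ∑ i, ((#{j | x j = x i} : ℝ)⁻¹ * (n * ν (x i))) • x i = _
    rw [mMean, Measure.eq_sum_smul_dirac_of_measure_compl_eq_zero hS, integral_smul_measure,
      integral_id_sum_smul_dirac _ _ _ fun a _ => measure_ne_top Q _,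
      Finset.sum_congr rfl fun i _ => mul_smul _ _ (x i),
      sum_inv_card_fiber_smul x (fun a => (n * ν a) • a), ENNReal.toReal_inv,
      ENNReal.toReal_ofReal (by positivity), Finset.smul_sum, Finset.smul_sum]
    refine Finset.sum_congr rfl fun a _ => ?_
    rw [smul_smul, smul_smul]
    congr 1
    field_simp
    rfl

end Empirical

section MeanSet

variable {d n : ℕ}

theorem Mset_empiricalMeasure_subset_cappedMeans (hn : 0 < n) (q : ℕ) (x : Fin n → Ed d) :
    Mset (empiricalMeasure x) (q / n) ⊆ cappedMeans x q := by
  rintro m (⟨p, μ, ⟨Q, rfl, hQ, hQ1, -, -⟩, rfl⟩ | ⟨v, -, μ, ⟨Q, rfl, hQ, hQ1, -, -⟩, rfl⟩) <;>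
    exact mMean_mem_cappedMeans hn hQ hQ1

theorem cappedMeans_subset_Mset_empiricalMeasure {q : ℕ} (hqn : q < n)
    (x : Fin n → Ed d) : cappedMeans x q ⊆ Mset (empiricalMeasure x) (q / n) := by
  intro m hm
  obtain ⟨w, hw, rfl, p, hp⟩ := exists_center_of_mem_cappedMeans hm
  have hn : 0 < n := by omega
  exact smul_sum_smul_mem_Mset hn hw (fun i => eq_one_of_dist_lt_dtmRadius hn hw hp)
    (fun i => dist_le_dtmRadius_of_pos hqn hw hp)

end MeanSet

theorem stmt_4_general {d : ℕ} (n : ℕ) (x : Fin n → Ed d)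
    (q : ℕ) (hq : 1 ≤ q) (hqn : q ≤ n) :
    Convex ℝ (Mset ((n : ℝ≥0∞)⁻¹ • ∑ i, Measure.dirac (x i)) ((q : ℝ) / n)) := by
  change Convex ℝ (Mset (empiricalMeasure x) (q / n))
  rcases hqn.lt_or_eq with hqn | rfl
  · rw [(Mset_empiricalMeasure_subset_cappedMeans (by omega) q x).antisymm
      (cappedMeans_subset_Mset_empiricalMeasure hqn x)]
    exact convex_cappedMeans x q
  · have hK := cappedMeans_card_subsingleton x
    rw [Fintype.card_fin] at hK
    exact (hK.anti (Mset_empiricalMeasure_subset_cappedMeans hq q x)).convex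

/-- for a uniform measure on `n` points in general position and `h = q/n`,
the set `M_h(P_n)` is convex. -/
theorem stmt_4 {d : ℕ} (n : ℕ) (hn : 0 < n) (x : Fin n → Ed d)
    (hgp : ∀ s : Finset (Fin n), s.card ≤ d + 1 →
      AffineIndependent ℝ (fun i : s => x i))
    (q : ℕ) (hq : 1 ≤ q) (hqn : q ≤ n) :
    Convex ℝ (Mset ((n : ℝ≥0∞)⁻¹ • ∑ i, Measure.dirac (x i)) ((q : ℝ) / n)) :=
  stmt_4_general n x q hq hqn
end

section
/- Let K > 0 and let P be a Borel probability measure on ℝ^d with support contained in B̄(0,K) such that P({y : ⟨y,v⟩ = c}) = 0 for every unit vector v and every c ∈ ℝ, and P(∂B̄(x,r)) = 0 for every x ∈ ℝ^d and every r ≥ 0. Then for every h ∈ (0,1), the set M_h(P) is convex. -/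
open MeasureTheory ENNReal Set Metric

/-!
Since `P` charges no sphere and no hyperplane, every localized measure is the normalized
restriction of `P` to an open ball `B(x, δ_{P,h}(x))` or half-space `H(v, c_{P,h}(v))` of mass `h`,
so the points of `M_h(P)` are of the form `h⁻¹ • ∫_T u dP` with `P T = h`. By the bathtub
principle, among all sets of mass `h` the ball around `x` minimises `∫_T ‖u - x‖²` and the
half-space in direction `v` maximises `⟪∫_T u, v⟫`.

Let `b` be a convex combination of two such integrals. If `⟪b, v⟫` reaches the half-space
maximum for some unit `v`, the equality case of the bathtub principle forces both integrals to
be the half-space integral. Otherwise `b` lies strictly inside in every direction, so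
`ψ x - 2⟪x, b⟫` is coercive, where `ψ = ballPotential P h` is
`ψ x = max_T (2⟪x, ∫_T u⟫ - ∫_T ‖u‖²)`, the maximum being attained by the ball around `x`.
At a minimiser `x₀` the ball integral, a continuous subgradient of `ψ / 2`, equals `b`.
-/

open Filter Topology
open scoped RealInnerProductSpace

section ThresholdMeasure

variable {α : Type*} [MeasurableSpace α] {μ : Measure α} {f : α → ℝ} {t : ℝ} {a : ℝ≥0∞}

theorem measure_lt_le_of_forall_lt (h : ∀ r < t, μ {y | f y ≤ r} ≤ a) :
    μ {y | f y < t} ≤ a := by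
  obtain ⟨u, hu_mono, hu_lt, hu_tendsto⟩ := exists_seq_strictMono_tendsto t
  have hunion : {y | f y < t} = ⋃ n, {y | f y ≤ u n} := by
    ext y
    simp only [mem_ofPred_eq, mem_iUnion]
    refine ⟨fun hy => ?_, fun ⟨n, hn⟩ => hn.trans_lt (hu_lt n)⟩
    exact ((hu_tendsto.eventually (lt_mem_nhds hy)).exists).imp fun _ => le_of_lt
  have hmono : Monotone fun n => {y | f y ≤ u n} :=
    fun m n hmn y (hy : f y ≤ u m) => hy.trans (hu_mono.monotone hmn)
  rw [hunion, hmono.measure_iUnion]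
  exact iSup_le fun n => h _ (hu_lt n)

theorem le_measure_le_of_forall_gt [IsFiniteMeasure μ] (hf : Measurable f)
    (h : ∀ r > t, a ≤ μ {y | f y < r}) : a ≤ μ {y | f y ≤ t} := by
  have hinter : ⋂ r > t, {y | f y < r} = {y | f y ≤ t} := by
    ext y
    simp only [mem_iInter, mem_ofPred_eq]
    exact ⟨fun hy => le_of_forall_gt fun r hr => hy r hr, fun hy r hr => hy.trans_lt hr⟩
  have hlim := tendsto_measure_biInter_gt (μ := μ) (a := t)
    (fun r _ => (measurableSet_lt hf measurable_const).nullMeasurableSet)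
    (fun i j _ hij y (hy : f y < i) => hy.trans_le hij) ⟨t + 1, by linarith, measure_ne_top _ _⟩
  rw [hinter] at hlim
  exact ge_of_tendsto hlim (eventually_nhdsWithin_of_forall h)

theorem measure_lt_eq_of_forall_lt_of_forall_gt [IsFiniteMeasure μ] (hf : Measurable f)
    (hlt : ∀ r < t, μ {y | f y ≤ r} ≤ a) (hgt : ∀ r > t, a ≤ μ {y | f y < r})
    (hnull : μ {y | f y = t} = 0) : μ {y | f y < t} = a := by
  refine le_antisymm (measure_lt_le_of_forall_lt hlt) ?_
  calc a ≤ μ {y | f y ≤ t} := le_measure_le_of_forall_gt hf hgt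
    _ ≤ μ ({y | f y < t} ∪ {y | f y = t}) := measure_mono fun y (hy : f y ≤ t) => hy.lt_or_eq
    _ ≤ μ {y | f y < t} := (measure_union_le _ _).trans (by rw [hnull, add_zero])

end ThresholdMeasure

section Bathtub

variable {α : Type*} [MeasurableSpace α] {μ : Measure α} [IsFiniteMeasure μ] {S T : Set α}
  {f : α → ℝ} {r : ℝ}

theorem setIntegral_sub_setIntegral_eq_of_measure_eq (hS : MeasurableSet S)
    (hT : MeasurableSet T) (hST : μ S = μ T) (hf : Integrable f μ) (r : ℝ) :
    ∫ x in S, f x ∂μ - ∫ x in T, f x ∂μ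
      = ∫ x in S \ T, (f x - r) ∂μ - ∫ x in T \ S, (f x - r) ∂μ := by
  have hdiff : μ.real (S \ T) = μ.real (T \ S) := by
    rw [measureReal_def, measureReal_def,
      measure_sdiff_symm hS.nullMeasurableSet hT.nullMeasurableSet hST (measure_ne_top _ _)]
  have hS_split := integral_inter_add_sdiff (s := S) hT hf.integrableOn
  have hT_split := integral_inter_add_sdiff (s := T) hS hf.integrableOn
  rw [inter_comm] at hT_split
  have hconst : ∀ A, ∫ x in A, (f x - r) ∂μ = ∫ x in A, f x ∂μ - μ.real A * r := fun A => by
    rw [integral_sub hf.integrableOn (integrableOn_const (measure_ne_top _ _)), setIntegral_const,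
      smul_eq_mul]
  rw [hconst, hconst, hdiff]
  linarith

theorem setIntegral_le_setIntegral_of_measure_eq (hS : MeasurableSet S)
    (hT : MeasurableSet T) (hST : μ S = μ T) (hf : Integrable f μ)
    (hS_le : ∀ x ∈ S \ T, f x ≤ r) (hT_ge : ∀ x ∈ T \ S, r ≤ f x) :
    ∫ x in S, f x ∂μ ≤ ∫ x in T, f x ∂μ := by
  have hST_nonpos : ∫ x in S \ T, (f x - r) ∂μ ≤ 0 :=
    setIntegral_nonpos (hS.diff hT) fun x hx => sub_nonpos.2 (hS_le x hx)
  have hTS_nonneg : 0 ≤ ∫ x in T \ S, (f x - r) ∂μ :=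
    setIntegral_nonneg (hT.diff hS) fun x hx => sub_nonneg.2 (hT_ge x hx)
  linarith [setIntegral_sub_setIntegral_eq_of_measure_eq hS hT hST hf r]

theorem ae_eq_set_of_setIntegral_le_of_measure_eq (hS : MeasurableSet S)
    (hT : MeasurableSet T) (hST : μ S = μ T) (hf : Integrable f μ)
    (hS_lt : ∀ᵐ x ∂μ, x ∈ S \ T → f x < r) (hT_ge : ∀ x ∈ T \ S, r ≤ f x)
    (hTS : ∫ x in T, f x ∂μ ≤ ∫ x in S, f x ∂μ) : S =ᵐ[μ] T := by
  have hS_lt' : ∀ᵐ x ∂μ.restrict (S \ T), 0 < r - f x := by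
    filter_upwards [(ae_restrict_iff' (hS.diff hT)).2 hS_lt] with x hx using sub_pos.2 hx
  have hTS_nonneg : 0 ≤ ∫ x in T \ S, (f x - r) ∂μ :=
    setIntegral_nonneg (hT.diff hS) fun x hx => sub_nonneg.2 (hT_ge x hx)
  have hzero : ∫ x in S \ T, (r - f x) ∂μ = 0 := by
    refine le_antisymm ?_ (integral_nonneg_of_ae (hS_lt'.mono fun x hx => hx.le))
    have := setIntegral_sub_setIntegral_eq_of_measure_eq hS hT hST hf r
    have hneg : ∫ x in S \ T, (r - f x) ∂μ = -∫ x in S \ T, (f x - r) ∂μ := by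
      rw [← integral_neg]; simp_rw [neg_sub]
    linarith
  have hae := (setIntegral_eq_zero_iff_of_nonneg_ae (hS_lt'.mono fun x hx => hx.le)
    ((integrable_const r).sub hf).integrableOn).1 hzero
  have hST_null : μ (S \ T) = 0 := by
    have hfalse : ∀ᵐ x ∂μ.restrict (S \ T), False := by
      filter_upwards [hae, hS_lt'] with x hx hpos
      exact hpos.ne' hx
    simpa [ae_iff] using hfalse
  refine ae_eq_set.2 ⟨hST_null, ?_⟩
  rwa [← measure_sdiff_symm hS.nullMeasurableSet hT.nullMeasurableSet hST (measure_ne_top _ _)]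

end Bathtub

theorem continuous_setIntegral_ball {X E : Type*} [PseudoMetricSpace X] [MeasurableSpace X]
    [OpensMeasurableSpace X] [NormedAddCommGroup E] [NormedSpace ℝ E] {μ : Measure X}
    {ρ : X → ℝ} (hρ : Continuous ρ) (hnull : ∀ x, μ (sphere x (ρ x)) = 0) {f : X → E}
    (hf : Integrable f μ) : Continuous fun x => ∫ u in ball x (ρ x), f u ∂μ := by
  refine continuous_iff_continuousAt.2 fun x₀ => ?_
  simp_rw [← integral_indicator measurableSet_ball]
  refine continuousAt_of_dominated
    (Eventually.of_forall fun _ => hf.aestronglyMeasurable.indicator measurableSet_ball)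
    (Eventually.of_forall fun _ => ae_of_all _ fun u => norm_indicator_le_norm_self f u)
    hf.norm ?_
  have hoff_sphere : ∀ᵐ u ∂μ, dist u x₀ ≠ ρ x₀ := measure_eq_zero_iff_ae_notMem.1 (hnull x₀)
  filter_upwards [hoff_sphere] with u hu
  have hdist : Continuous fun x => dist u x := continuous_const.dist continuous_id
  rcases hu.lt_or_gt with hlt | hgt
  · refine (continuousAt_const (y := f u)).congr ?_
    filter_upwards [(isOpen_lt hdist hρ).mem_nhds hlt] with x hx
    exact (indicator_of_mem (mem_ball.2 hx) f).symm
  · refine (continuousAt_const (y := (0 : E))).congr ?_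
    filter_upwards [(isOpen_lt hρ hdist).mem_nhds hgt] with x hx
    exact (indicator_of_notMem (fun h => (mem_ball.1 h).not_gt hx) f).symm

theorem eq_zero_of_forall_inner_sub_nonneg {E : Type*} [NormedAddCommGroup E]
    [InnerProductSpace ℝ E] {F : E → E} (hF : Continuous F) {x₀ : E}
    (h : ∀ z, 0 ≤ ⟪z - x₀, F z⟫) : F x₀ = 0 := by
  have hdir : ∀ w, 0 ≤ ⟪w, F x₀⟫ := by
    intro w
    have hline : Tendsto (fun t : ℝ => x₀ + t • w) (𝓝[>] 0) (𝓝 x₀) := by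
      have hcont : Continuous fun t : ℝ => x₀ + t • w := by fun_prop
      simpa using (hcont.tendsto 0).mono_left nhdsWithin_le_nhds
    refine ge_of_tendsto (((continuous_const.inner hF).tendsto x₀).comp hline) ?_
    filter_upwards [self_mem_nhdsWithin] with t (ht : 0 < t)
    have := h (x₀ + t • w)
    rw [add_sub_cancel_left, real_inner_smul_left] at this
    exact nonneg_of_mul_nonneg_right this ht
  have := hdir (-F x₀)
  rw [inner_neg_left, real_inner_self_eq_norm_sq] at this
  exact norm_eq_zero.1 (by nlinarith [norm_nonneg (F x₀)])

theorem integral_inner_left {α E : Type*} [MeasurableSpace α] {μ : Measure α}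
    [NormedAddCommGroup E] [InnerProductSpace ℝ E] [CompleteSpace E] {f : α → E}
    (hf : Integrable f μ) (c : E) : ∫ x, ⟪f x, c⟫ ∂μ = ⟪∫ x, f x ∂μ, c⟫ := by
  simp_rw [real_inner_comm c]
  exact integral_inner hf c

theorem MeasureTheory.Measure.eq_restrict_of_le_of_forall_subset_eq {α : Type*}
    [MeasurableSpace α] {Q μ : Measure α} {U W N : Set α} (hQμ : Q ≤ μ) (hU : MeasurableSet U)
    (hQU : ∀ A ⊆ U, Q A = μ A) (hQW : Q W = 0) (hN : μ N = 0) (hcover : Uᶜ ⊆ W ∪ N) :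
    Q = μ.restrict U := by
  ext A hA
  rw [Measure.restrict_apply hA, ← measure_inter_add_sdiff A hU (μ := Q),
    hQU _ inter_subset_right, measure_mono_null (fun x hx => hcover hx.2)
      (measure_union_null hQW (nonpos_iff_eq_zero.1 ((hQμ N).trans hN.le))), add_zero]

theorem norm_setIntegral_le_integral_norm {α E : Type*} [MeasurableSpace α] {μ : Measure α}
    [NormedAddCommGroup E] [NormedSpace ℝ E] {f : α → E} (hf : Integrable f μ) (s : Set α) :
    ‖∫ x in s, f x ∂μ‖ ≤ ∫ x, ‖f x‖ ∂μ :=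
  (norm_integral_le_integral_norm _).trans
    (setIntegral_le_integral hf.norm (ae_of_all _ fun _ => norm_nonneg _))

section Localization

variable {d : ℕ} {P : Measure (Ed d)} {h : ℝ}

theorem dtmRadius_nonneg (x : Ed d) : 0 ≤ dtmRadius P h x :=
  Real.sInf_nonneg fun _ hr => hr.1.le

theorem dtmRadius_le_of_lt_measure {x : Ed d} {r : ℝ} (hr : 0 < r)
    (hPr : ENNReal.ofReal h < P (closedBall x r)) : dtmRadius P h x ≤ r :=
  csInf_le ⟨0, fun _ hs => hs.1.le⟩ ⟨hr, hPr⟩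

variable [IsProbabilityMeasure P]

theorem exists_lt_measure_closedBall (hh1 : h < 1) (x : Ed d) :
    ∃ r, 0 < r ∧ ENNReal.ofReal h < P (closedBall x r) := by
  have hmono : Monotone fun n : ℕ => closedBall x n :=
    fun m n hmn => closedBall_subset_closedBall (Nat.cast_le.2 hmn)
  have hsup : ENNReal.ofReal h < ⨆ n : ℕ, P (closedBall x n) := by
    rw [← hmono.measure_iUnion, iUnion_closedBall_nat, measure_univ]
    exact ENNReal.ofReal_lt_one.2 hh1
  obtain ⟨n, hn⟩ := lt_iSup_iff.1 hsup
  exact ⟨n + 1, by positivity,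
    hn.trans_le (measure_mono (closedBall_subset_closedBall (by linarith)))⟩

theorem exists_lt_measure_of_dtmRadius_lt (hh1 : h < 1) {x : Ed d} {r : ℝ}
    (hr : dtmRadius P h x < r) : ∃ s < r, 0 < s ∧ ENNReal.ofReal h < P (closedBall x s) := by
  obtain ⟨r₀, hr₀⟩ := exists_lt_measure_closedBall (P := P) hh1 x
  obtain ⟨s, hs, hsr⟩ := exists_lt_of_csInf_lt ⟨r₀, hr₀⟩ hr
  exact ⟨s, hsr, hs⟩

theorem lipschitzWith_dtmRadius (hh1 : h < 1) : LipschitzWith 1 (dtmRadius P h) := by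
  refine LipschitzWith.of_le_add fun x y => le_of_forall_gt_imp_ge_of_dense fun r hr => ?_
  obtain ⟨s, hsr, hs0, hs⟩ := exists_lt_measure_of_dtmRadius_lt hh1 (lt_sub_iff_add_lt.2 hr)
  have hsub : closedBall y s ⊆ closedBall x (s + dist x y) := fun u hu =>
    (dist_triangle u y x).trans <| by
      rw [dist_comm y x]; exact add_le_add (mem_closedBall.1 hu) le_rfl
  have := dtmRadius_le_of_lt_measure (by positivity) (hs.trans_le (measure_mono hsub))
  linarith

theorem measure_ball_dtmRadius (hh1 : h < 1)
    (hsph : ∀ (x : Ed d) (r : ℝ), 0 ≤ r → P (sphere x r) = 0) (x : Ed d) :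
    P (ball x (dtmRadius P h x)) = ENNReal.ofReal h := by
  refine measure_lt_eq_of_forall_lt_of_forall_gt (f := fun y => dist y x)
    (measurable_id.dist measurable_const) (fun r hr => ?_) (fun r hr => ?_)
    (hsph x _ (dtmRadius_nonneg x))
  · by_contra! hlt
    have hr0 : 0 < r := by
      by_contra! hr0
      have hnull : P (closedBall x r) = 0 := measure_mono_null
        (fun y (hy : dist y x ≤ r) => mem_sphere.2 ((hy.trans hr0).antisymm dist_nonneg))
        (hsph x 0 le_rfl)
      exact ENNReal.not_lt_zero (hnull ▸ hlt)
    exact hr.not_ge (dtmRadius_le_of_lt_measure hr0 hlt)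
  · obtain ⟨s, hsr, -, hs⟩ := exists_lt_measure_of_dtmRadius_lt hh1 hr
    exact hs.le.trans (measure_mono (closedBall_subset_ball hsr))

end Localization

section HalfSpace

variable {d : ℕ} {P : Measure (Ed d)} {h : ℝ}

def upperHalfSpace (P : Measure (Ed d)) (h : ℝ) (v : Ed d) : Set (Ed d) :=
  {y | cInf P h v < ⟪y, v⟫}

theorem measurableSet_upperHalfSpace (v : Ed d) : MeasurableSet (upperHalfSpace P h v) :=
  measurableSet_lt measurable_const (by fun_prop)

variable [IsProbabilityMeasure P]

theorem exists_lt_measure_inner_gt (hh1 : h < 1) (v : Ed d) :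
    ∃ c, ENNReal.ofReal h < P {y | c < ⟪y, v⟫} := by
  have hmono : Monotone fun n : ℕ => {y : Ed d | -(n : ℝ) < ⟪y, v⟫} :=
    fun m n hmn y (hy : -(m : ℝ) < _) => lt_of_le_of_lt (neg_le_neg (Nat.cast_le.2 hmn)) hy
  have hunion : ⋃ n : ℕ, {y : Ed d | -(n : ℝ) < ⟪y, v⟫} = univ :=
    eq_univ_of_forall fun y => mem_iUnion.2 <|
      (exists_nat_gt (-⟪y, v⟫)).imp fun _ hn => neg_lt.1 hn
  have hsup : ENNReal.ofReal h < ⨆ n : ℕ, P {y | -(n : ℝ) < ⟪y, v⟫} := by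
    rw [← hmono.measure_iUnion, hunion, measure_univ]
    exact ENNReal.ofReal_lt_one.2 hh1
  obtain ⟨n, hn⟩ := lt_iSup_iff.1 hsup
  exact ⟨_, hn⟩

theorem bddAbove_setOf_lt_measure_inner_gt (hh0 : 0 < h) (v : Ed d) :
    BddAbove {c | ENNReal.ofReal h < P {y | c < ⟪y, v⟫}} := by
  have hanti : Antitone fun n : ℕ => {y : Ed d | (n : ℝ) < ⟪y, v⟫} :=
    fun m n hmn y (hy : (n : ℝ) < _) => lt_of_le_of_lt (Nat.cast_le.2 hmn) hy
  have hinter : ⋂ n : ℕ, {y : Ed d | (n : ℝ) < ⟪y, v⟫} = ∅ :=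
    eq_empty_of_forall_notMem fun y hy => by
      obtain ⟨n, hn⟩ := exists_nat_ge ⟪y, v⟫
      exact (mem_iInter.1 hy n : (n : ℝ) < _).not_ge hn
  have hinf : ⨅ n : ℕ, P {y | (n : ℝ) < ⟪y, v⟫} < ENNReal.ofReal h := by
    rw [← hanti.measure_iInter
      (fun _ => (measurableSet_lt measurable_const (by fun_prop)).nullMeasurableSet)
      ⟨0, measure_ne_top _ _⟩, hinter, measure_empty]
    exact ENNReal.ofReal_pos.2 hh0
  obtain ⟨n, hn⟩ := iInf_lt_iff.1 hinf
  refine ⟨n, fun c (hc : ENNReal.ofReal h < _) => le_of_not_gt fun hnc => ?_⟩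
  exact (hc.trans_le (measure_mono fun y (hy : c < _) => hnc.trans hy)).not_gt hn

theorem measure_upperHalfSpace (hh : h ∈ Ioo 0 1) {v : Ed d}
    (hhyp : ∀ c : ℝ, P {y | ⟪y, v⟫ = c} = 0) :
    P (upperHalfSpace P h v) = ENNReal.ofReal h := by
  have hbdd := bddAbove_setOf_lt_measure_inner_gt (P := P) hh.1 v
  have hne := exists_lt_measure_inner_gt (P := P) hh.2 v
  have hset : upperHalfSpace P h v = {y | -⟪y, v⟫ < -cInf P h v} := by
    ext y; exact (neg_lt_neg_iff (α := ℝ)).symm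
  rw [hset]
  refine measure_lt_eq_of_forall_lt_of_forall_gt (by fun_prop) (fun r hr => ?_) (fun r hr => ?_) ?_
  · obtain ⟨c, hc, hcr⟩ := exists_between (show cInf P h v < -r by linarith)
    refine (measure_mono fun y (hy : -⟪y, v⟫ ≤ r) => ?_).trans
      (le_of_not_gt fun hlt => hc.not_ge (le_csSup hbdd hlt))
    show c < ⟪y, v⟫
    linarith
  · obtain ⟨c, hc, hrc⟩ := exists_lt_of_lt_csSup hne (neg_lt.1 hr)
    have hc' : ENNReal.ofReal h < P {y | c < ⟪y, v⟫} := hc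
    refine hc'.le.trans (measure_mono fun y (hy : c < ⟪y, v⟫) => ?_)
    show -⟪y, v⟫ < r
    linarith
  · simpa only [neg_inj] using hhyp (cInf P h v)

end HalfSpace

section MeanSet

variable {d : ℕ} {P : Measure (Ed d)} {h : ℝ}

theorem mMean_smul_restrict (hh0 : 0 < h) (U : Set (Ed d)) :
    mMean ((ENNReal.ofReal h)⁻¹ • P.restrict U) = h⁻¹ • ∫ u in U, u ∂P := by
  rw [mMean, integral_smul_measure, ENNReal.toReal_inv, ENNReal.toReal_ofReal hh0.le]

-- The four conditions on `Q` in `PlocPt` and `PlocInf`.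
theorem restrict_mem_localized {U W : Set (Ed d)} (hU : MeasurableSet U)
    (hPU : P U = ENNReal.ofReal h) (hWU : Disjoint W U) :
    P.restrict U ≤ P ∧ P.restrict U univ = ENNReal.ofReal h ∧
      (∀ A ⊆ U, P.restrict U A = P A) ∧ P.restrict U W = 0 := by
  refine ⟨Measure.restrict_le_self, by rwa [Measure.restrict_apply_univ], fun A hA => ?_, ?_⟩
  · rw [Measure.restrict_apply' hU, inter_eq_self_of_subset_left hA]
  · rw [Measure.restrict_apply' hU, hWU.inter_eq, measure_empty]

theorem exists_eq_smul_setIntegral_of_mem_Mset (hh0 : 0 < h)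
    (hsph : ∀ (x : Ed d) (r : ℝ), 0 ≤ r → P (sphere x r) = 0)
    (hhyp : ∀ v : Ed d, ‖v‖ = 1 → ∀ c : ℝ, P {y | ⟪y, v⟫ = c} = 0) {m : Ed d}
    (hm : m ∈ Mset P h) :
    ∃ T, MeasurableSet T ∧ P T = ENNReal.ofReal h ∧ m = h⁻¹ • ∫ u in T, u ∂P := by
  rcases hm with ⟨x, _, ⟨Q, rfl, hQP, hQuniv, hQU, hQW⟩, rfl⟩ |
    ⟨v, hv, _, ⟨Q, rfl, hQP, hQuniv, hQU, hQW⟩, rfl⟩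
  · obtain rfl := Measure.eq_restrict_of_le_of_forall_subset_eq hQP measurableSet_ball hQU hQW
      (hsph x _ (dtmRadius_nonneg x)) fun y hy => by
        by_cases hy' : y ∈ closedBall x (dtmRadius P h x)
        · exact Or.inr (closedBall_sdiff_ball.subset ⟨hy', hy⟩)
        · exact Or.inl hy'
    exact ⟨_, measurableSet_ball, by rwa [Measure.restrict_apply_univ] at hQuniv,
      mMean_smul_restrict hh0 _⟩
  · obtain rfl := Measure.eq_restrict_of_le_of_forall_subset_eq hQP (measurableSet_upperHalfSpace v)
      hQU hQW (hhyp v hv (cInf P h v)) fun y hy => (le_of_not_gt hy : ⟪y, v⟫ ≤ cInf P h v).lt_or_eq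
    exact ⟨_, measurableSet_upperHalfSpace v, by rwa [Measure.restrict_apply_univ] at hQuniv,
      mMean_smul_restrict hh0 _⟩

variable [IsProbabilityMeasure P]

theorem smul_setIntegral_ball_mem_Mset (hh : h ∈ Ioo 0 1)
    (hsph : ∀ (x : Ed d) (r : ℝ), 0 ≤ r → P (sphere x r) = 0) (x : Ed d) :
    h⁻¹ • ∫ u in ball x (dtmRadius P h x), u ∂P ∈ Mset P h :=
  Or.inl ⟨x, _, ⟨_, rfl, restrict_mem_localized measurableSet_ball
    (measure_ball_dtmRadius hh.2 hsph x) (disjoint_compl_left_iff_subset.2 ball_subset_closedBall)⟩,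
    (mMean_smul_restrict hh.1 _).symm⟩

theorem smul_setIntegral_upperHalfSpace_mem_Mset (hh : h ∈ Ioo 0 1) {v : Ed d} (hv : ‖v‖ = 1)
    (hhyp : ∀ c : ℝ, P {y | ⟪y, v⟫ = c} = 0) :
    h⁻¹ • ∫ u in upperHalfSpace P h v, u ∂P ∈ Mset P h :=
  Or.inr ⟨v, hv, _, ⟨_, rfl, restrict_mem_localized (measurableSet_upperHalfSpace v)
    (measure_upperHalfSpace hh hhyp)
    (disjoint_left.2 fun y (hy : ⟪y, v⟫ < _) (hy' : _ < ⟪y, v⟫) => hy.not_gt hy')⟩,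
    (mMean_smul_restrict hh.1 _).symm⟩

end MeanSet

section Extremal

variable {d : ℕ} {P : Measure (Ed d)} [IsProbabilityMeasure P] {h : ℝ} {T : Set (Ed d)}

theorem setIntegral_norm_sub_sq (hP : MemLp id 2 P) (x : Ed d) (T : Set (Ed d)) :
    ∫ u in T, ‖u - x‖ ^ 2 ∂P
      = ∫ u in T, ‖u‖ ^ 2 ∂P - 2 * ⟪x, ∫ u in T, u ∂P⟫ + P.real T * ‖x‖ ^ 2 := by
  have hP1 : Integrable (fun u : Ed d => u) P := hP.integrable one_le_two
  have hP2 : Integrable (fun u : Ed d => ‖u‖ ^ 2) P := hP.integrable_norm_pow'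
  have hinner : Integrable (fun u : Ed d => 2 * ⟪u, x⟫) P := (hP1.inner_const x).const_mul 2
  have hquad : Integrable (fun u : Ed d => ‖u‖ ^ 2 - 2 * ⟪u, x⟫) P := hP2.sub hinner
  simp_rw [norm_sub_sq_real]
  rw [integral_add hquad.integrableOn (integrableOn_const (measure_ne_top _ _)),
    integral_sub hP2.integrableOn hinner.integrableOn, integral_const_mul,
    integral_inner_left hP1.integrableOn, setIntegral_const, smul_eq_mul, real_inner_comm]

theorem setIntegral_norm_sub_sq_ball_le (hh1 : h < 1)
    (hsph : ∀ (x : Ed d) (r : ℝ), 0 ≤ r → P (sphere x r) = 0) (hP : MemLp id 2 P) (x : Ed d)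
    (hT : MeasurableSet T) (hPT : P T = ENNReal.ofReal h) :
    ∫ u in ball x (dtmRadius P h x), ‖u - x‖ ^ 2 ∂P ≤ ∫ u in T, ‖u - x‖ ^ 2 ∂P :=
  setIntegral_le_setIntegral_of_measure_eq measurableSet_ball hT
    (by rw [measure_ball_dtmRadius hh1 hsph, hPT]) (hP.sub (memLp_const x)).integrable_norm_pow'
    (fun u hu => pow_le_pow_left₀ (norm_nonneg _) (mem_ball_iff_norm.1 hu.1).le 2)
    (fun u hu => pow_le_pow_left₀ (dtmRadius_nonneg x) (not_lt.1 (hu.2 ∘ mem_ball_iff_norm.2)) 2)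

noncomputable def ballPotential (P : Measure (Ed d)) (h : ℝ) (x : Ed d) : ℝ :=
  2 * ⟪x, ∫ u in ball x (dtmRadius P h x), u ∂P⟫ - ∫ u in ball x (dtmRadius P h x), ‖u‖ ^ 2 ∂P

theorem le_ballPotential (hh1 : h < 1)
    (hsph : ∀ (x : Ed d) (r : ℝ), 0 ≤ r → P (sphere x r) = 0) (hP : MemLp id 2 P) (x : Ed d)
    (hT : MeasurableSet T) (hPT : P T = ENNReal.ofReal h) :
    2 * ⟪x, ∫ u in T, u ∂P⟫ - ∫ u in T, ‖u‖ ^ 2 ∂P ≤ ballPotential P h x := by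
  have hball := setIntegral_norm_sub_sq_ball_le hh1 hsph hP x hT hPT
  rw [setIntegral_norm_sub_sq hP, setIntegral_norm_sub_sq hP, measureReal_def, measureReal_def,
    measure_ball_dtmRadius hh1 hsph, hPT] at hball
  rw [ballPotential]
  linarith

theorem ballPotential_sub_ballPotential_le (hh1 : h < 1)
    (hsph : ∀ (x : Ed d) (r : ℝ), 0 ≤ r → P (sphere x r) = 0) (hP : MemLp id 2 P) (x z : Ed d) :
    ballPotential P h z - ballPotential P h x
      ≤ 2 * ⟪z - x, ∫ u in ball z (dtmRadius P h z), u ∂P⟫ := by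
  have := le_ballPotential hh1 hsph hP x measurableSet_ball (measure_ball_dtmRadius hh1 hsph z)
  rw [ballPotential, inner_sub_left]
  linarith

theorem continuous_setIntegral_ball_dtmRadius (hh1 : h < 1)
    (hsph : ∀ (x : Ed d) (r : ℝ), 0 ≤ r → P (sphere x r) = 0) {E : Type*} [NormedAddCommGroup E]
    [NormedSpace ℝ E] {f : Ed d → E} (hf : Integrable f P) :
    Continuous fun x => ∫ u in ball x (dtmRadius P h x), f u ∂P :=
  continuous_setIntegral_ball (lipschitzWith_dtmRadius hh1).continuous
    (fun x => hsph x _ (dtmRadius_nonneg x)) hf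

theorem continuous_ballPotential (hh1 : h < 1)
    (hsph : ∀ (x : Ed d) (r : ℝ), 0 ≤ r → P (sphere x r) = 0) (hP : MemLp id 2 P) :
    Continuous (ballPotential P h) :=
  (continuous_const.mul (continuous_id.inner (continuous_setIntegral_ball_dtmRadius hh1 hsph
    (hP.integrable one_le_two)))).sub
    (continuous_setIntegral_ball_dtmRadius hh1 hsph hP.integrable_norm_pow')

end Extremal

section HalfSpaceExtremal

variable {d : ℕ} {P : Measure (Ed d)} [IsProbabilityMeasure P] {h : ℝ} {v : Ed d}
  {T : Set (Ed d)}

theorem inner_setIntegral_le_upperHalfSpace (hh : h ∈ Ioo 0 1)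
    (hhyp : ∀ c : ℝ, P {y | ⟪y, v⟫ = c} = 0) (hP1 : Integrable id P) (hT : MeasurableSet T)
    (hPT : P T = ENNReal.ofReal h) :
    ⟪∫ u in T, u ∂P, v⟫ ≤ ⟪∫ u in upperHalfSpace P h v, u ∂P, v⟫ := by
  rw [← integral_inner_left (f := fun u => u) hP1.integrableOn,
    ← integral_inner_left (f := fun u => u) hP1.integrableOn]
  exact setIntegral_le_setIntegral_of_measure_eq hT (measurableSet_upperHalfSpace v)
    (by rw [hPT, measure_upperHalfSpace hh hhyp]) (hP1.inner_const v) (r := cInf P h v)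
    (fun _ hu => le_of_not_gt hu.2) (fun _ hu => hu.1.le)

theorem setIntegral_eq_of_inner_upperHalfSpace_le (hh : h ∈ Ioo 0 1)
    (hhyp : ∀ c : ℝ, P {y | ⟪y, v⟫ = c} = 0) (hP1 : Integrable id P) (hT : MeasurableSet T)
    (hPT : P T = ENNReal.ofReal h)
    (hle : ⟪∫ u in upperHalfSpace P h v, u ∂P, v⟫ ≤ ⟪∫ u in T, u ∂P, v⟫) :
    ∫ u in T, u ∂P = ∫ u in upperHalfSpace P h v, u ∂P := by
  rw [← integral_inner_left (f := fun u => u) hP1.integrableOn,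
    ← integral_inner_left (f := fun u => u) hP1.integrableOn] at hle
  refine setIntegral_congr_set (ae_eq_set_of_setIntegral_le_of_measure_eq hT
    (measurableSet_upperHalfSpace v) (by rw [hPT, measure_upperHalfSpace hh hhyp])
    (hP1.inner_const v) (r := cInf P h v) ?_ (fun _ hu => hu.1.le) hle)
  filter_upwards [measure_eq_zero_iff_ae_notMem.1 (hhyp (cInf P h v))] with u hu hmem
  exact (le_of_not_gt hmem.2).lt_of_ne hu

theorem lipschitzOnWith_inner_setIntegral_upperHalfSpace (hh : h ∈ Ioo 0 1)
    (hhyp : ∀ v : Ed d, ‖v‖ = 1 → ∀ c : ℝ, P {y | ⟪y, v⟫ = c} = 0) (hP1 : Integrable id P) :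
    LipschitzOnWith (∫ u, ‖u‖ ∂P).toNNReal
      (fun v => ⟪∫ u in upperHalfSpace P h v, u ∂P, v⟫) (sphere 0 1) := by
  refine LipschitzOnWith.of_le_add_mul' _ fun v hv w hw => ?_
  have hv1 : ‖v‖ = 1 := mem_sphere_zero_iff_norm.1 hv
  have hw1 : ‖w‖ = 1 := mem_sphere_zero_iff_norm.1 hw
  have hvw := inner_setIntegral_le_upperHalfSpace hh (hhyp w hw1) hP1
    (measurableSet_upperHalfSpace v) (measure_upperHalfSpace hh (hhyp v hv1))
  have hnorm := (real_inner_le_norm (∫ u in upperHalfSpace P h v, u ∂P) (v - w)).trans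
    (mul_le_mul_of_nonneg_right
      (norm_setIntegral_le_integral_norm (f := fun u : Ed d => u) hP1 _) (norm_nonneg _))
  rw [inner_sub_right, ← dist_eq_norm] at hnorm
  linarith

end HalfSpaceExtremal

section Convexity

variable {d : ℕ} {P : Measure (Ed d)} [IsProbabilityMeasure P] {h : ℝ}

theorem tendsto_ballPotential_sub_inner (hh : h ∈ Ioo 0 1)
    (hsph : ∀ (x : Ed d) (r : ℝ), 0 ≤ r → P (sphere x r) = 0)
    (hhyp : ∀ v : Ed d, ‖v‖ = 1 → ∀ c : ℝ, P {y | ⟪y, v⟫ = c} = 0) (hP : MemLp id 2 P)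
    {b : Ed d} (hb : ∀ v : Ed d, ‖v‖ = 1 → ⟪b, v⟫ < ⟪∫ u in upperHalfSpace P h v, u ∂P, v⟫) :
    Tendsto (fun x => ballPotential P h x - 2 * ⟪x, b⟫) (cocompact (Ed d)) atTop := by
  have hP1 : Integrable id P := hP.integrable one_le_two
  obtain ⟨ε, hε, hgap⟩ := (isCompact_sphere (0 : Ed d) 1).exists_forall_le'
    ((lipschitzOnWith_inner_setIntegral_upperHalfSpace hh hhyp hP1).continuousOn.sub
      (continuous_const.inner continuous_id).continuousOn)
    fun v hv => sub_pos.2 (hb v (mem_sphere_zero_iff_norm.1 hv))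
  have hbound : ∀ x ≠ 0,
      2 * ε * ‖x‖ + -∫ u, ‖u‖ ^ 2 ∂P ≤ ballPotential P h x - 2 * ⟪x, b⟫ := by
    intro x hx
    obtain ⟨v, hv, hxv⟩ : ∃ v : Ed d, ‖v‖ = 1 ∧ x = ‖x‖ • v :=
      ⟨‖x‖⁻¹ • x, norm_smul_inv_norm hx, (smul_inv_smul₀ (norm_ne_zero_iff.2 hx) x).symm⟩
    have hscale : ∀ y, ⟪x, y⟫ = ‖x‖ * ⟪y, v⟫ := fun y => by
      rw [real_inner_comm v y]
      nth_rewrite 1 [hxv]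
      exact real_inner_smul_left _ _ _
    have hpot := le_ballPotential hh.2 hsph hP x (measurableSet_upperHalfSpace v)
      (measure_upperHalfSpace hh (hhyp v hv))
    have hsecond : ∫ u in upperHalfSpace P h v, ‖u‖ ^ 2 ∂P ≤ ∫ u, ‖u‖ ^ 2 ∂P :=
      setIntegral_le_integral hP.integrable_norm_pow' (ae_of_all _ fun _ => by positivity)
    have hεv : ε ≤ ⟪∫ u in upperHalfSpace P h v, u ∂P, v⟫ - ⟪b, v⟫ :=
      hgap v (mem_sphere_zero_iff_norm.2 hv)
    rw [hscale] at hpot ⊢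
    nlinarith [norm_nonneg x]
  refine tendsto_atTop_mono' _ ?_ (tendsto_atTop_add_const_right _ (-∫ u, ‖u‖ ^ 2 ∂P)
    (tendsto_norm_cocompact_atTop.const_mul_atTop (show 0 < 2 * ε by positivity)))
  filter_upwards [isCompact_singleton.compl_mem_cocompact] with x hx using hbound x hx

theorem exists_setIntegral_ball_eq (hh : h ∈ Ioo 0 1)
    (hsph : ∀ (x : Ed d) (r : ℝ), 0 ≤ r → P (sphere x r) = 0)
    (hhyp : ∀ v : Ed d, ‖v‖ = 1 → ∀ c : ℝ, P {y | ⟪y, v⟫ = c} = 0) (hP : MemLp id 2 P)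
    {b : Ed d} (hb : ∀ v : Ed d, ‖v‖ = 1 → ⟪b, v⟫ < ⟪∫ u in upperHalfSpace P h v, u ∂P, v⟫) :
    ∃ x, ∫ u in ball x (dtmRadius P h x), u ∂P = b := by
  have hbB := continuous_setIntegral_ball_dtmRadius (f := fun u => u) hh.2 hsph
    (hP.integrable one_le_two)
  obtain ⟨x₀, hx₀⟩ := ((continuous_ballPotential hh.2 hsph hP).sub
    (continuous_const.mul (continuous_id.inner continuous_const))).exists_forall_le
    (tendsto_ballPotential_sub_inner hh hsph hhyp hP hb)
  refine ⟨x₀, sub_eq_zero.1 (eq_zero_of_forall_inner_sub_nonneg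
    (F := fun x => ∫ u in ball x (dtmRadius P h x), u ∂P - b) (hbB.sub continuous_const)
    fun z => ?_)⟩
  have hmin : ballPotential P h x₀ - 2 * ⟪x₀, b⟫ ≤ ballPotential P h z - 2 * ⟪z, b⟫ := hx₀ z
  have hsub := ballPotential_sub_ballPotential_le hh.2 hsph hP x₀ z
  rw [inner_sub_right, inner_sub_left z x₀ b]
  linarith

theorem smul_add_smul_eq_setIntegral_upperHalfSpace (hh : h ∈ Ioo 0 1) {v : Ed d}
    (hhyp : ∀ c : ℝ, P {y | ⟪y, v⟫ = c} = 0) (hP1 : Integrable id P) {T₁ T₂ : Set (Ed d)}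
    (hT₁ : MeasurableSet T₁) (hPT₁ : P T₁ = ENNReal.ofReal h) (hT₂ : MeasurableSet T₂)
    (hPT₂ : P T₂ = ENNReal.ofReal h) {a b : ℝ} (ha : 0 ≤ a) (hb : 0 ≤ b) (hab : a + b = 1)
    (hle : ⟪∫ u in upperHalfSpace P h v, u ∂P, v⟫
      ≤ ⟪a • ∫ u in T₁, u ∂P + b • ∫ u in T₂, u ∂P, v⟫) :
    a • ∫ u in T₁, u ∂P + b • ∫ u in T₂, u ∂P = ∫ u in upperHalfSpace P h v, u ∂P := by
  set σ := ⟪∫ u in upperHalfSpace P h v, u ∂P, v⟫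
  have hface : ∀ {c : ℝ} {T : Set (Ed d)}, MeasurableSet T → P T = ENNReal.ofReal h →
      c * (σ - ⟪∫ u in T, u ∂P, v⟫) = 0 →
      c • ∫ u in T, u ∂P = c • ∫ u in upperHalfSpace P h v, u ∂P := by
    intro c T hT hPT hc
    rcases mul_eq_zero.1 hc with rfl | hσ
    · simp only [zero_smul]
    · rw [setIntegral_eq_of_inner_upperHalfSpace_le hh hhyp hP1 hT hPT (sub_eq_zero.1 hσ).le]
  have h₁ : 0 ≤ σ - ⟪∫ u in T₁, u ∂P, v⟫ :=
    sub_nonneg.2 (inner_setIntegral_le_upperHalfSpace hh hhyp hP1 hT₁ hPT₁)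
  have h₂ : 0 ≤ σ - ⟪∫ u in T₂, u ∂P, v⟫ :=
    sub_nonneg.2 (inner_setIntegral_le_upperHalfSpace hh hhyp hP1 hT₂ hPT₂)
  rw [inner_add_left, real_inner_smul_left, real_inner_smul_left] at hle
  have hσ : a * σ + b * σ = σ := by rw [← add_mul, hab, one_mul]
  have hsum : a * (σ - ⟪∫ u in T₁, u ∂P, v⟫) + b * (σ - ⟪∫ u in T₂, u ∂P, v⟫) = 0 :=
    le_antisymm (by linarith) (add_nonneg (mul_nonneg ha h₁) (mul_nonneg hb h₂))
  obtain ⟨hz₁, hz₂⟩ := (add_eq_zero_iff_of_nonneg (mul_nonneg ha h₁) (mul_nonneg hb h₂)).1 hsum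
  rw [hface hT₁ hPT₁ hz₁, hface hT₂ hPT₂ hz₂, ← add_smul, hab, one_smul]

end Convexity

theorem stmt_5_general {d : ℕ} (K : ℝ)
    (P : Measure (Ed d)) [IsProbabilityMeasure P]
    (hsupp : P ((closedBall (0 : Ed d) K)ᶜ) = 0)
    (hhyp : ∀ (v : Ed d), ‖v‖ = 1 → ∀ c : ℝ, P {y : Ed d | (inner ℝ y v : ℝ) = c} = 0)
    (hsph : ∀ (x : Ed d) (r : ℝ), 0 ≤ r → P (sphere x r) = 0)
    (h : ℝ) (hh : h ∈ Set.Ioo (0:ℝ) 1) :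
    Convex ℝ (Mset P h) := by
  have hP : MemLp id 2 P := MemLp.of_bound aestronglyMeasurable_id K <| by
    filter_upwards [measure_eq_zero_iff_ae_notMem.1 hsupp] with u hu
    simpa using hu
  intro m₁ hm₁ m₂ hm₂ a b ha hb hab
  obtain ⟨T₁, hT₁, hPT₁, rfl⟩ := exists_eq_smul_setIntegral_of_mem_Mset hh.1 hsph hhyp hm₁
  obtain ⟨T₂, hT₂, hPT₂, rfl⟩ := exists_eq_smul_setIntegral_of_mem_Mset hh.1 hsph hhyp hm₂
  rw [smul_comm a, smul_comm b, ← smul_add]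
  by_cases hinterior : ∀ v : Ed d, ‖v‖ = 1 →
      ⟪a • ∫ u in T₁, u ∂P + b • ∫ u in T₂, u ∂P, v⟫ < ⟪∫ u in upperHalfSpace P h v, u ∂P, v⟫
  · obtain ⟨x, hx⟩ := exists_setIntegral_ball_eq hh hsph hhyp hP hinterior
    rw [← hx]
    exact smul_setIntegral_ball_mem_Mset hh hsph x
  · push Not at hinterior
    obtain ⟨v, hv, hle⟩ := hinterior
    rw [smul_add_smul_eq_setIntegral_upperHalfSpace hh (hhyp v hv) (hP.integrable one_le_two)
      hT₁ hPT₁ hT₂ hPT₂ ha hb hab hle]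
    exact smul_setIntegral_upperHalfSpace_mem_Mset hh hv (hhyp v hv)

/-- for a compactly supported measure putting mass neither on hyperplanes nor on
spheres, the set `M_h(P)` is convex. -/
theorem stmt_5 {d : ℕ} (K : ℝ) (hK : 0 < K)
    (P : Measure (Ed d)) [IsProbabilityMeasure P]
    (hsupp : P ((closedBall (0 : Ed d) K)ᶜ) = 0)
    (hhyp : ∀ (v : Ed d), ‖v‖ = 1 → ∀ c : ℝ, P {y : Ed d | (inner ℝ y v : ℝ) = c} = 0)
    (hsph : ∀ (x : Ed d) (r : ℝ), 0 ≤ r → P (sphere x r) = 0)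
    (h : ℝ) (hh : h ∈ Set.Ioo (0:ℝ) 1) :
    Convex ℝ (Mset P h) :=
  stmt_5_general K P hsupp hhyp hsph h hh
end

section
/- Let P be a Borel probability measure on ℝ^d with finite second moment and h ∈ (0,1). Then for all x, y ∈ ℝ^d and every μ ∈ 𝒫_{x,h}(P), d_{P,h}²(y) − ‖y‖² ≤ d_{P,h}²(x) − ‖x‖² − 2⟨y − x, m(μ)⟩, with equality if and only if μ ∈ 𝒫_{y,h}(P). -/
open MeasureTheory ENNReal Set Metric

/-!
Write `F(r) = P(B̄(z, r))`. Since `l ↦ δ_{P,l}(z)` is a generalized inverse of `F`, the layer-cake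
formula gives `h · d²_{P,h}(z) = 2 ∫₀^∞ r (h - F(r))₊ dr`, while
`∫ ‖u - z‖² dQ = 2 ∫₀^∞ r Q(B̄(z, r)ᶜ) dr` for any measure `Q`. When `Q ≤ P` has mass `h`, the
second integrand dominates the first, so `h · d²_{P,h}(z) ≤ ∫ ‖u - z‖² dQ`, and the integrands
agree almost everywhere exactly when `Q` coincides with `P` on `B(z, δ_{P,h}(z))` and vanishes
outside `B̄(z, δ_{P,h}(z))`. For `μ = Q / h ∈ 𝒫_{x,h}(P)` equality holds at `x`; expanding
`‖u - y‖² = ‖u - x‖² + ‖y‖² - ‖x‖² - 2⟪y - x, u⟫` under `Q` then yields the inequality at `y`,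
with equality iff `Q` is also localized at `y`.
-/

open Filter Topology

theorem MeasureTheory.Measure.apply_eq_of_le_of_subset {α : Type*} [MeasurableSpace α]
    {μ ν : Measure α} [IsFiniteMeasure μ] (hle : μ ≤ ν) {s A : Set α} (hs : μ s = ν s)
    (hA : A ⊆ s) : μ A = ν A := by
  have hrestrict : μ.restrict s = ν.restrict s :=
    Measure.eq_of_le_of_measure_univ_eq (Measure.restrict_mono subset_rfl hle) (by simp [hs])
  rw [← Measure.restrict_eq_self μ hA, hrestrict, Measure.restrict_eq_self ν hA]

theorem exists_mem_Ioo_of_ae_restrict {s : Set ℝ} {p : ℝ → Prop}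
    (hp : ∀ᵐ r ∂volume.restrict s, p r) {a b : ℝ} (hs : Ioo a b ⊆ s) (hab : a < b) :
    ∃ r ∈ Ioo a b, p r := by
  have : (ae (volume.restrict (Ioo a b))).NeBot := ae_neBot.2 (by simpa using hab)
  exact ((ae_restrict_mem measurableSet_Ioo).and
    (ae_restrict_of_ae_restrict_of_subset hs hp)).exists

theorem lintegral_ofReal_sq_eq {α : Type*} [MeasurableSpace α] (μ : Measure α) {f : α → ℝ}
    (f_nn : 0 ≤ᵐ[μ] f) (f_mble : AEMeasurable f μ) :
    ∫⁻ a, ENNReal.ofReal (f a ^ 2) ∂μ =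
      ENNReal.ofReal 2 * ∫⁻ t in Ioi 0, μ {a | t < f a} * ENNReal.ofReal t := by
  simpa [show (2 : ℝ) - 1 = 1 by norm_num] using
    lintegral_rpow_eq_lintegral_meas_lt_mul μ f_nn f_mble two_pos

theorem lintegral_ofReal_norm_sub_sq {E : Type*} [NormedAddCommGroup E] [MeasurableSpace E]
    [OpensMeasurableSpace E] (Q : Measure E) (z : E) :
    ∫⁻ u, ENNReal.ofReal (‖u - z‖ ^ 2) ∂Q =
      ENNReal.ofReal 2 * ∫⁻ r in Ioi 0, Q (closedBall z r)ᶜ * ENNReal.ofReal r := by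
  rw [lintegral_ofReal_sq_eq Q (f := fun u => ‖u - z‖) (ae_of_all _ fun _ => norm_nonneg _)
    (continuous_id.sub continuous_const).norm.aemeasurable]
  congr with r
  congr 2
  ext u
  simp [dist_eq_norm]

theorem integral_norm_sub_sq_eq {E : Type*} [NormedAddCommGroup E] [InnerProductSpace ℝ E]
    [CompleteSpace E] [MeasurableSpace E] {Q : Measure E} [IsFiniteMeasure Q]
    (hQ : MemLp id 2 Q) (x y : E) :
    ∫ u, ‖u - y‖ ^ 2 ∂Q = ∫ u, ‖u - x‖ ^ 2 ∂Q + Q.real univ * (‖y‖ ^ 2 - ‖x‖ ^ 2) -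
      2 * inner ℝ (y - x) (∫ u, u ∂Q) := by
  have hsq : Integrable (fun u => ‖u - x‖ ^ 2) Q :=
    (hQ.sub (memLp_const x)).integrable_norm_pow two_ne_zero
  have hid : Integrable (fun u : E => u) Q := hQ.integrable one_le_two
  have hshift : Integrable (fun u => ‖u - x‖ ^ 2 + (‖y‖ ^ 2 - ‖x‖ ^ 2)) Q :=
    hsq.add (integrable_const _)
  have hinner : Integrable (fun u => 2 * inner ℝ (y - x) u) Q :=
    (hid.const_inner (y - x)).const_mul 2
  have hpt : ∀ u : E, ‖u - y‖ ^ 2 =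
      ‖u - x‖ ^ 2 + (‖y‖ ^ 2 - ‖x‖ ^ 2) - 2 * inner ℝ (y - x) u := by
    intro u
    rw [norm_sub_sq_real, norm_sub_sq_real, inner_sub_left, real_inner_comm y, real_inner_comm x]
    ring
  simp_rw [hpt]
  rw [integral_sub hshift hinner, integral_add hsq (integrable_const _), integral_const,
    integral_const_mul, integral_inner hid, smul_eq_mul]

section Balls

variable {α : Type*} [PseudoMetricSpace α] [MeasurableSpace α]

theorem measure_ball_le_of_forall_closedBall_le (μ : Measure α) (z : α) {δ : ℝ} (hδ : 0 < δ)
    {c : ℝ≥0∞} (hc : ∀ r ∈ Ioo 0 δ, μ (closedBall z r) ≤ c) : μ (ball z δ) ≤ c := by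
  obtain ⟨u, hu_mono, hu_mem, hu_lim⟩ := exists_seq_strictMono_tendsto' hδ
  have hball : ball z δ = ⋃ n, closedBall z (u n) := by
    refine Subset.antisymm (fun y hy => ?_)
      (iUnion_subset fun n => closedBall_subset_ball (hu_mem n).2)
    obtain ⟨n, hn⟩ := (hu_lim.eventually (lt_mem_nhds (mem_ball.1 hy))).exists
    exact mem_iUnion.2 ⟨n, mem_closedBall.2 hn.le⟩
  have hmono : Monotone fun n => closedBall z (u n) :=
    fun _ _ hmn => closedBall_subset_closedBall (hu_mono.monotone hmn)
  rw [hball, hmono.measure_iUnion]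
  exact iSup_le fun n => hc _ (hu_mem n)

variable [OpensMeasurableSpace α]

theorem tendsto_measure_closedBall_nhdsGT (μ : Measure α) [IsFiniteMeasure μ] (z : α) (r : ℝ) :
    Tendsto (fun r' => μ (closedBall z r')) (𝓝[>] r) (𝓝 (μ (closedBall z r))) := by
  have := tendsto_measure_biInter_gt (μ := μ) (s := closedBall z) (a := r)
    (fun _ _ => measurableSet_closedBall.nullMeasurableSet)
    (fun _ _ _ hij => closedBall_subset_closedBall hij) ⟨r + 1, by linarith, measure_ne_top _ _⟩
  rwa [biInter_gt_closedBall] at this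

theorem measure_compl_closedBall_of_measure_univ {Q : Measure α} {m : ℝ≥0∞}
    (hQuniv : Q univ = m) (hm : m ≠ ∞) (z : α) (r : ℝ) :
    Q (closedBall z r)ᶜ = m - Q (closedBall z r) := by
  rw [measure_compl measurableSet_closedBall
    (ne_top_of_le_ne_top (hQuniv ▸ hm) (measure_mono (subset_univ _))), hQuniv]

theorem sub_measure_closedBall_le_measure_compl {P Q : Measure α} (hQle : Q ≤ P) {m : ℝ≥0∞}
    (hQuniv : Q univ = m) (hm : m ≠ ∞) (z : α) (r : ℝ) :
    m - P (closedBall z r) ≤ Q (closedBall z r)ᶜ := by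
  rw [measure_compl_closedBall_of_measure_univ hQuniv hm]
  exact tsub_le_tsub_left (hQle _) _

end Balls

section DtmRadius

variable {d : ℕ} (P : Measure (Ed d)) (z : Ed d)

theorem dtmRadius_nonneg_s6 (l : ℝ) : 0 ≤ dtmRadius P l z :=
  Real.sInf_nonneg fun _ hr => hr.1.le

variable {P z} in
theorem dtmRadius_le_of_lt_measure_s6 {l r : ℝ} (hr : 0 < r)
    (hlr : ENNReal.ofReal l < P (closedBall z r)) : dtmRadius P l z ≤ r :=
  csInf_le ⟨0, fun _ hs => hs.1.le⟩ ⟨hr, hlr⟩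

variable {P z} in
theorem measure_closedBall_le_of_lt_dtmRadius {l r : ℝ} (hr0 : 0 < r)
    (hr : r < dtmRadius P l z) : P (closedBall z r) ≤ ENNReal.ofReal l :=
  le_of_not_gt fun h => hr.not_ge (dtmRadius_le_of_lt_measure_s6 hr0 h)

variable [IsProbabilityMeasure P]

theorem exists_pos_lt_measure_closedBall {l : ℝ} (hl : l < 1) :
    ∃ r, 0 < r ∧ ENNReal.ofReal l < P (closedBall z r) := by
  have hmono : Monotone fun n : ℕ => closedBall z n :=
    fun _ _ hmn => closedBall_subset_closedBall (Nat.cast_le.2 hmn)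
  have hlim := tendsto_measure_iUnion_atTop (μ := P) hmono
  rw [iUnion_closedBall_nat, measure_univ] at hlim
  obtain ⟨n, hn, hlt⟩ := ((eventually_gt_atTop 0).and
    (hlim.eventually (lt_mem_nhds (ENNReal.ofReal_lt_one.2 hl)))).exists
  exact ⟨n, Nat.cast_pos.2 hn, hlt⟩

variable {P z} in
theorem le_dtmRadius_of_measure_le {l r : ℝ} (hl : l < 1)
    (hr : P (closedBall z r) ≤ ENNReal.ofReal l) : r ≤ dtmRadius P l z :=
  le_csInf (exists_pos_lt_measure_closedBall P z hl) fun _ hs => le_of_not_gt fun hsr =>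
    (hs.2.trans_le ((measure_mono (closedBall_subset_closedBall hsr.le)).trans hr)).false

variable {P z} in
theorem ofReal_le_measure_closedBall_of_dtmRadius_lt {l r : ℝ} (hl : l < 1)
    (hr : dtmRadius P l z < r) : ENNReal.ofReal l ≤ P (closedBall z r) :=
  le_of_not_gt fun h => hr.not_ge (le_dtmRadius_of_measure_le hl h.le)

theorem dtmRadius_monotoneOn : MonotoneOn (fun l => dtmRadius P l z) (Iio 1) :=
  fun _ _ _ hb hab => csInf_le_csInf ⟨0, fun _ hs => hs.1.le⟩
    (exists_pos_lt_measure_closedBall P z hb)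
    fun _ hr => ⟨hr.1, (ENNReal.ofReal_le_ofReal hab).trans_lt hr.2⟩

theorem aemeasurable_dtmRadius {h : ℝ} (hh : h < 1) :
    AEMeasurable (fun l => dtmRadius P l z) (volume.restrict (Ioo 0 h)) :=
  aemeasurable_restrict_of_monotoneOn measurableSet_Ioo
    ((dtmRadius_monotoneOn P z).mono fun _ hl => hl.2.trans hh)

theorem volume_setOf_lt_dtmRadius {h r : ℝ} (hh : h < 1) (hr : 0 < r) :
    volume ({l | r < dtmRadius P l z} ∩ Ioo 0 h) = ENNReal.ofReal h - P (closedBall z r) := by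
  set c := P.real (closedBall z r)
  have hc0 : 0 ≤ c := measureReal_nonneg
  have hc : P (closedBall z r) = ENNReal.ofReal c := (ofReal_measureReal (measure_ne_top _ _)).symm
  have hsub : Ioo c h ⊆ {l | r < dtmRadius P l z} ∩ Ioo 0 h := by
    rintro l ⟨hcl, hlh⟩
    have hlt : P (closedBall z r) < ENNReal.ofReal l := by
      rw [hc]; exact (ENNReal.ofReal_lt_ofReal_iff_of_nonneg hc0).2 hcl
    obtain ⟨r', hlt', hrr'⟩ := (((tendsto_measure_closedBall_nhdsGT P z r).eventually
      (gt_mem_nhds hlt)).and self_mem_nhdsWithin).exists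
    exact ⟨hrr'.trans_le (le_dtmRadius_of_measure_le (hlh.trans hh) hlt'.le),
      hc0.trans_lt hcl, hlh⟩
  have hsup : {l | r < dtmRadius P l z} ∩ Ioo 0 h ⊆ Ico c h := by
    rintro l ⟨hrl, hl0, hlh⟩
    refine ⟨le_of_not_gt fun hlc => hrl.not_ge (dtmRadius_le_of_lt_measure_s6 hr ?_), hlh⟩
    rw [hc]; exact (ENNReal.ofReal_lt_ofReal_iff_of_nonneg hl0.le).2 hlc
  have hvol : ENNReal.ofReal (h - c) = ENNReal.ofReal h - P (closedBall z r) := by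
    rw [ENNReal.ofReal_sub h hc0, hc]
  refine le_antisymm ((measure_mono hsup).trans_eq ?_) ((measure_mono hsub).trans_eq' ?_)
  · rw [Real.volume_Ico, hvol]
  · rw [Real.volume_Ioo, hvol]

theorem lintegral_dtmRadius_sq {h : ℝ} (hh : h < 1) :
    ∫⁻ l in Ioo 0 h, ENNReal.ofReal (dtmRadius P l z ^ 2) =
      ENNReal.ofReal 2 *
        ∫⁻ r in Ioi 0, (ENNReal.ofReal h - P (closedBall z r)) * ENNReal.ofReal r := by
  rw [lintegral_ofReal_sq_eq _ (ae_of_all _ fun l => dtmRadius_nonneg_s6 P z l)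
    (aemeasurable_dtmRadius P z hh)]
  refine congrArg _ (setLIntegral_congr_fun measurableSet_Ioi fun r hr => ?_)
  rw [Measure.restrict_apply' measurableSet_Ioo, volume_setOf_lt_dtmRadius P z hh hr]

-- If `l ↦ δ_{P,l}(z)²` is not integrable on `(0, h)`, both sides are the junk value `0`.
theorem mul_dtm_sq_eq_toReal {h : ℝ} (hh : h ∈ Ioo (0 : ℝ) 1) :
    h * dtm P h z ^ 2 = (∫⁻ l in Ioo 0 h, ENNReal.ofReal (dtmRadius P l z ^ 2)).toReal := by
  have hint : ∫ l in (0 : ℝ)..h, dtmRadius P l z ^ 2 =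
      (∫⁻ l in Ioo 0 h, ENNReal.ofReal (dtmRadius P l z ^ 2)).toReal := by
    rw [intervalIntegral.integral_of_le hh.1.le, integral_Ioc_eq_integral_Ioo]
    exact integral_eq_lintegral_of_nonneg_ae (ae_of_all _ fun _ => sq_nonneg _)
      ((aemeasurable_dtmRadius P z hh.2).pow_const 2).aestronglyMeasurable
  rw [dtm, hint, Real.sq_sqrt (mul_nonneg (one_div_nonneg.2 hh.1.le) toReal_nonneg)]
  field_simp [hh.1.ne']

end DtmRadius

section Localized

variable {d : ℕ} {P Q : Measure (Ed d)} {h : ℝ} {z : Ed d}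

def IsLocalizedAt (P Q : Measure (Ed d)) (h : ℝ) (z : Ed d) : Prop :=
  (∀ A : Set (Ed d), A ⊆ ball z (dtmRadius P h z) → Q A = P A) ∧
    Q (closedBall z (dtmRadius P h z))ᶜ = 0

theorem mem_PlocPt_iff_isLocalizedAt (hh : 0 < h) {μ : Measure (Ed d)}
    (hμ : μ = (ENNReal.ofReal h)⁻¹ • Q) (hQle : Q ≤ P) (hQuniv : Q univ = ENNReal.ofReal h) :
    μ ∈ PlocPt P h z ↔ IsLocalizedAt P Q h z := by
  refine ⟨?_, fun hloc => ⟨Q, hμ, hQle, hQuniv, hloc⟩⟩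
  rintro ⟨Q', hμ', -, -, hloc⟩
  have hunsmul : ∀ {R : Measure (Ed d)}, μ = (ENNReal.ofReal h)⁻¹ • R → R = ENNReal.ofReal h • μ :=
    fun hR => by rw [hR, smul_smul, ENNReal.mul_inv_cancel (by simpa) ofReal_ne_top, one_smul]
  rwa [hunsmul hμ, ← hunsmul hμ']

theorem IsLocalizedAt.ofReal_sub_measure_closedBall_eq [IsProbabilityMeasure P]
    (hloc : IsLocalizedAt P Q h z) (hh : h < 1) (hQuniv : Q univ = ENNReal.ofReal h) {r : ℝ}
    (hr : r ≠ dtmRadius P h z) :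
    ENNReal.ofReal h - P (closedBall z r) = Q (closedBall z r)ᶜ := by
  rcases hr.lt_or_gt with hlt | hgt
  · rw [measure_compl_closedBall_of_measure_univ hQuniv ofReal_ne_top,
      hloc.1 _ (closedBall_subset_ball hlt)]
  · rw [measure_mono_null (compl_subset_compl.2 (closedBall_subset_closedBall hgt.le)) hloc.2,
      tsub_eq_zero_of_le (ofReal_le_measure_closedBall_of_dtmRadius_lt hh hgt)]

theorem measure_compl_closedBall_dtmRadius_eq_zero [IsProbabilityMeasure P] [IsFiniteMeasure Q]
    (hh : h < 1) (hQuniv : Q univ = ENNReal.ofReal h)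
    (hae : ∀ᵐ r ∂volume.restrict (Ioi 0),
      ENNReal.ofReal h - P (closedBall z r) = ENNReal.ofReal h - Q (closedBall z r)) :
    Q (closedBall z (dtmRadius P h z))ᶜ = 0 := by
  have hgt : ∀ r > dtmRadius P h z, ENNReal.ofReal h ≤ Q (closedBall z r) := by
    intro r hr
    obtain ⟨r', ⟨hδr', hr'r⟩, hr'⟩ := exists_mem_Ioo_of_ae_restrict hae
      (fun s hs => (dtmRadius_nonneg_s6 P z h).trans_lt hs.1) hr
    rw [tsub_eq_zero_of_le (ofReal_le_measure_closedBall_of_dtmRadius_lt hh hδr'), eq_comm,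
      tsub_eq_zero_iff_le] at hr'
    exact hr'.trans (measure_mono (closedBall_subset_closedBall hr'r.le))
  have hδ : ENNReal.ofReal h ≤ Q (closedBall z (dtmRadius P h z)) :=
    ge_of_tendsto (tendsto_measure_closedBall_nhdsGT Q z _) (eventually_nhdsWithin_of_forall hgt)
  rw [measure_compl_closedBall_of_measure_univ hQuniv ofReal_ne_top, tsub_eq_zero_of_le hδ]

theorem measure_ball_dtmRadius_eq (hQle : Q ≤ P)
    (hae : ∀ᵐ r ∂volume.restrict (Ioi 0),
      ENNReal.ofReal h - P (closedBall z r) = ENNReal.ofReal h - Q (closedBall z r)) :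
    Q (ball z (dtmRadius P h z)) = P (ball z (dtmRadius P h z)) := by
  refine le_antisymm (hQle _) ?_
  rcases le_or_gt (dtmRadius P h z) 0 with hδ | hδ
  · simp [ball_eq_empty.2 hδ]
  refine measure_ball_le_of_forall_closedBall_le P z hδ fun r hr => ?_
  obtain ⟨r', ⟨hrr', hr'δ⟩, hr'⟩ := exists_mem_Ioo_of_ae_restrict hae
    (fun s hs => hr.1.trans hs.1) hr.2
  have hP : P (closedBall z r') ≤ ENNReal.ofReal h :=
    measure_closedBall_le_of_lt_dtmRadius (hr.1.trans hrr') hr'δ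
  have hQP : Q (closedBall z r') = P (closedBall z r') :=
    (ENNReal.sub_right_inj ofReal_ne_top ((hQle _).trans hP) hP).1 hr'.symm
  calc P (closedBall z r) ≤ P (closedBall z r') :=
        measure_mono (closedBall_subset_closedBall hrr'.le)
    _ = Q (closedBall z r') := hQP.symm
    _ ≤ Q (ball z (dtmRadius P h z)) := measure_mono (closedBall_subset_ball hr'δ)

theorem isLocalizedAt_of_ae [IsProbabilityMeasure P] (hh : h < 1) (hQle : Q ≤ P)
    (hQuniv : Q univ = ENNReal.ofReal h)
    (hae : ∀ᵐ r ∂volume.restrict (Ioi 0),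
      ENNReal.ofReal h - P (closedBall z r) = Q (closedBall z r)ᶜ) :
    IsLocalizedAt P Q h z := by
  have := isFiniteMeasure_of_le P hQle
  have hae' : ∀ᵐ r ∂volume.restrict (Ioi 0),
      ENNReal.ofReal h - P (closedBall z r) = ENNReal.ofReal h - Q (closedBall z r) := by
    filter_upwards [hae] with r hr
    rwa [← measure_compl_closedBall_of_measure_univ hQuniv ofReal_ne_top]
  exact ⟨fun A hA => Measure.apply_eq_of_le_of_subset hQle (measure_ball_dtmRadius_eq hQle hae') hA,
    measure_compl_closedBall_dtmRadius_eq_zero hh hQuniv hae'⟩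

theorem lintegral_dtmRadius_sq_le [IsProbabilityMeasure P] (hh : h < 1) (hQle : Q ≤ P)
    (hQuniv : Q univ = ENNReal.ofReal h) :
    ∫⁻ l in Ioo 0 h, ENNReal.ofReal (dtmRadius P l z ^ 2) ≤
      ∫⁻ u, ENNReal.ofReal (‖u - z‖ ^ 2) ∂Q := by
  rw [lintegral_dtmRadius_sq P z hh, lintegral_ofReal_norm_sub_sq]
  gcongr with r
  exact sub_measure_closedBall_le_measure_compl hQle hQuniv ofReal_ne_top z r

theorem lintegral_dtmRadius_sq_eq_iff [IsProbabilityMeasure P] (hh : h < 1) (hQle : Q ≤ P)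
    (hQuniv : Q univ = ENNReal.ofReal h) (hfin : ∫⁻ u, ENNReal.ofReal (‖u - z‖ ^ 2) ∂Q ≠ ∞) :
    ∫⁻ l in Ioo 0 h, ENNReal.ofReal (dtmRadius P l z ^ 2) =
      ∫⁻ u, ENNReal.ofReal (‖u - z‖ ^ 2) ∂Q ↔ IsLocalizedAt P Q h z := by
  rw [lintegral_ofReal_norm_sub_sq] at hfin
  rw [lintegral_dtmRadius_sq P z hh, lintegral_ofReal_norm_sub_sq,
    ENNReal.mul_right_inj (by simp) ofReal_ne_top]
  have hle : ∀ r, (ENNReal.ofReal h - P (closedBall z r)) * ENNReal.ofReal r ≤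
      Q (closedBall z r)ᶜ * ENNReal.ofReal r := fun r => mul_le_mul_of_nonneg_right
    (sub_measure_closedBall_le_measure_compl hQle hQuniv ofReal_ne_top z r) zero_le
  have hmeas : Measurable fun r : ℝ => Q (closedBall z r)ᶜ * ENNReal.ofReal r :=
    (Antitone.measurable fun _ _ hab => measure_mono
      (compl_subset_compl.2 (closedBall_subset_closedBall hab))).mul ENNReal.measurable_ofReal
  have hfin' : ∫⁻ r in Ioi 0, Q (closedBall z r)ᶜ * ENNReal.ofReal r ≠ ∞ :=
    fun htop => hfin (by rw [htop, mul_top (by simp)])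
  constructor
  · intro heq
    have hae := ae_eq_of_ae_le_of_lintegral_le (ae_of_all _ hle) (heq ▸ hfin')
      hmeas.aemeasurable heq.ge
    refine isLocalizedAt_of_ae hh hQle hQuniv ?_
    filter_upwards [hae, ae_restrict_mem measurableSet_Ioi] with r hr hr0
    exact (ENNReal.mul_left_inj (by simpa using hr0) ofReal_ne_top).1 hr
  · intro hloc
    refine lintegral_congr_ae ?_
    filter_upwards [ae_restrict_of_ae (Measure.ae_ne volume (dtmRadius P h z))] with r hr
    rw [hloc.ofReal_sub_measure_closedBall_eq hh hQuniv hr]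

theorem mul_dtm_sq_le_integral [IsProbabilityMeasure P] (hh : h ∈ Ioo (0 : ℝ) 1) (hQle : Q ≤ P)
    (hQuniv : Q univ = ENNReal.ofReal h) (hint : Integrable (fun u => ‖u - z‖ ^ 2) Q) :
    h * dtm P h z ^ 2 ≤ ∫ u, ‖u - z‖ ^ 2 ∂Q := by
  rw [mul_dtm_sq_eq_toReal P z hh, integral_eq_lintegral_of_nonneg_ae
    (ae_of_all _ fun _ => sq_nonneg _) hint.aestronglyMeasurable]
  exact toReal_mono hint.lintegral_lt_top.ne (lintegral_dtmRadius_sq_le hh.2 hQle hQuniv)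

theorem mul_dtm_sq_eq_integral_iff [IsProbabilityMeasure P] (hh : h ∈ Ioo (0 : ℝ) 1)
    (hQle : Q ≤ P) (hQuniv : Q univ = ENNReal.ofReal h)
    (hint : Integrable (fun u => ‖u - z‖ ^ 2) Q) :
    h * dtm P h z ^ 2 = ∫ u, ‖u - z‖ ^ 2 ∂Q ↔ IsLocalizedAt P Q h z := by
  have hfin := hint.lintegral_lt_top.ne
  rw [mul_dtm_sq_eq_toReal P z hh, integral_eq_lintegral_of_nonneg_ae
    (ae_of_all _ fun _ => sq_nonneg _) hint.aestronglyMeasurable, toReal_eq_toReal_iff'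
    (ne_top_of_le_ne_top hfin (lintegral_dtmRadius_sq_le hh.2 hQle hQuniv)) hfin]
  exact lintegral_dtmRadius_sq_eq_iff hh.2 hQle hQuniv hfin

end Localized

/-- semiconcavity-type inequality for the squared DTM, with its equality case. -/
theorem stmt_6 {d : ℕ} (P : Measure (Ed d)) [IsProbabilityMeasure P]
    (hP2 : ∫⁻ u, ENNReal.ofReal (‖u‖ ^ 2) ∂P < ⊤)
    (h : ℝ) (hh : h ∈ Set.Ioo (0:ℝ) 1)
    (x y : Ed d) (μ : Measure (Ed d)) (hμ : μ ∈ PlocPt P h x) :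
    dtm P h y ^ 2 - ‖y‖ ^ 2 ≤
      dtm P h x ^ 2 - ‖x‖ ^ 2 - 2 * (inner ℝ (y - x) (mMean μ) : ℝ) ∧
    (dtm P h y ^ 2 - ‖y‖ ^ 2 =
        dtm P h x ^ 2 - ‖x‖ ^ 2 - 2 * (inner ℝ (y - x) (mMean μ) : ℝ) ↔
      μ ∈ PlocPt P h y) := by
  obtain ⟨Q, hμQ, hQle, hQuniv, hloc⟩ := hμ
  have := isFiniteMeasure_of_le P hQle
  have hQ2 : MemLp id 2 Q := ((memLp_two_iff_integrable_sq_norm aestronglyMeasurable_id).2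
    ⟨by fun_prop, (hasFiniteIntegral_iff_ofReal (ae_of_all _ fun _ => sq_nonneg _)).2 hP2⟩)
    |>.mono_measure hQle
  have hint : ∀ z : Ed d, Integrable (fun u => ‖u - z‖ ^ 2) Q := fun z =>
    (hQ2.sub (memLp_const z)).integrable_norm_pow two_ne_zero
  have hx : h * dtm P h x ^ 2 = ∫ u, ‖u - x‖ ^ 2 ∂Q :=
    (mul_dtm_sq_eq_integral_iff hh hQle hQuniv (hint x)).2 hloc
  have hmean : ∫ u, u ∂Q = h • mMean μ := by
    rw [hμQ, mMean, integral_smul_measure, toReal_inv, toReal_ofReal hh.1.le,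
      smul_inv_smul₀ hh.1.ne']
  have hgap : h * ((dtm P h x ^ 2 - ‖x‖ ^ 2 - 2 * inner ℝ (y - x) (mMean μ)) -
      (dtm P h y ^ 2 - ‖y‖ ^ 2)) = ∫ u, ‖u - y‖ ^ 2 ∂Q - h * dtm P h y ^ 2 := by
    rw [integral_norm_sub_sq_eq hQ2 x y, ← hx, hmean, inner_smul_right, measureReal_def, hQuniv,
      toReal_ofReal hh.1.le]
    ring
  refine ⟨sub_nonneg.1 ((mul_nonneg_iff_of_pos_left hh.1).1 (hgap ▸ sub_nonneg.2
    (mul_dtm_sq_le_integral hh hQle hQuniv (hint y)))), ?_⟩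
  rw [mem_PlocPt_iff_isLocalizedAt hh.1 hμQ hQle hQuniv,
    ← mul_dtm_sq_eq_integral_iff hh hQle hQuniv (hint y), eq_comm, ← sub_eq_zero,
    ← mul_eq_zero_iff_left hh.1.ne', hgap, sub_eq_zero, eq_comm]
end
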